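/- arXiv:1607.03587 — 8 statements merged into one kernel-verified Lean document; each statement's English description precedes it below -/
import Mathlib

section
/- Let (e_i) be a normalized spreading Schauder basis of a Banach space X which is not weakly null. Then the summing functional is bounded: there exists a constant C such that |Σ_i a_i| ≤ C‖Σ_i a_i e_i‖ for every finitely supported scalar sequence (a_i); equivalently the linear functional S determined by S(e_i) = 1 for all i extends to a bounded linear functional on X. -/
open Filter Finset Topology NormedSpace
open scoped NNReal

/-- `e` is a Schauder basis of `X`: every vector has a unique expansion whose partial
sums converge in norm. -/
def IsSchauderBasis {X : Type} [NormedAddCommGroup X] [NormedSpace ℝ X] (e : ℕ → X) : Prop :=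
  ∀ x : X, ∃! a : ℕ → ℝ,
    Tendsto (fun n => ∑ i ∈ Finset.range n, a i • e i) atTop (𝓝 x)

/-- A sequence is weakly null if it tends to `0` in the weak topology. -/
def WeaklyNull {X : Type} [NormedAddCommGroup X] [NormedSpace ℝ X] (z : ℕ → X) : Prop :=
  ∀ f : X →L[ℝ] ℝ, Tendsto (fun n => f (z n)) atTop (𝓝 (0 : ℝ))

/-- `e` is spreading: it is equivalent to each of its subsequences. -/
def IsSpreading {X : Type} [NormedAddCommGroup X] [NormedSpace ℝ X] (e : ℕ → X) : Prop :=
  ∀ n : ℕ → ℕ, StrictMono n → ∃ C : ℝ, 1 ≤ C ∧ ∀ (k : ℕ) (a : ℕ → ℝ),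
    ‖∑ i ∈ Finset.range k, a i • e i‖ ≤ C * ‖∑ i ∈ Finset.range k, a i • e (n i)‖ ∧
    ‖∑ i ∈ Finset.range k, a i • e (n i)‖ ≤ C * ‖∑ i ∈ Finset.range k, a i • e i‖

/-!
Pick a functional `f` and a subsequence `(e (n j))` with `f (e (n j)) → L ≠ 0`. If the summing
functional were unbounded, spreading along the shifts `i ↦ r + i` would give, for every `r`, a vector
`∑ a_i e_{r+i}` with `∑ a_i = 1` and norm `< 1/(r+1)`. Moving all of these onto one further
subsequence `m` of `n` on which `f` is close enough to `L` at every position `≥ r` yields vectors of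
norm `≤ C_m/(r+1)` whose `f`-value stays near `L`: a contradiction. Once bounded on the span of the
`e i`, the summing functional extends to `X` by Hahn–Banach.
-/

theorem exists_strictMono_tendsto_ne_of_not_tendsto {E : Type*} [MetricSpace E] [ProperSpace E]
    {u : ℕ → E} {a : E} (hu : Bornology.IsBounded (Set.range u)) (h : ¬Tendsto u atTop (𝓝 a)) :
    ∃ b ≠ a, ∃ φ : ℕ → ℕ, StrictMono φ ∧ Tendsto (u ∘ φ) atTop (𝓝 b) := by
  obtain ⟨s, hs, hfreq⟩ := not_tendsto_iff_exists_frequently_notMem.1 h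
  obtain ⟨ε, hε, hball⟩ := Metric.mem_nhds_iff.1 hs
  obtain ⟨ψ, hψ, hψs⟩ := extraction_of_frequently_atTop hfreq
  have hK : ∀ n, u (ψ n) ∈ Set.range u \ Metric.ball a ε :=
    fun n => ⟨⟨_, rfl⟩, fun hn => hψs n (hball hn)⟩
  obtain ⟨b, hb, φ, hφ, hlim⟩ := tendsto_subseq_of_bounded (hu.subset Set.sdiff_subset) hK
  have hb' : b ∉ Metric.ball a ε :=
    closure_minimal (Set.sdiff_subset_compl _ _) Metric.isOpen_ball.isClosed_compl hb
  exact ⟨b, fun hba => hb' (hba ▸ Metric.mem_ball_self hε), ψ ∘ φ, hψ.comp hφ, hlim⟩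

theorem abs_sum_mul_sub_le {ι : Type*} {s : Finset ι} {a x : ι → ℝ} {L ε : ℝ}
    (ha : ∑ i ∈ s, a i = 1) (hx : ∀ i ∈ s, |x i - L| ≤ ε) :
    |∑ i ∈ s, a i * x i - L| ≤ ε * ∑ i ∈ s, |a i| := by
  have hsub : ∑ i ∈ s, a i * x i - L = ∑ i ∈ s, a i * (x i - L) := by
    simp only [mul_sub, Finset.sum_sub_distrib, ← Finset.sum_mul, ha, one_mul]
  rw [hsub, Finset.mul_sum]
  refine (Finset.abs_sum_le_sum_abs _ _).trans (Finset.sum_le_sum fun i hi => ?_)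
  rw [abs_mul, mul_comm ε]
  exact mul_le_mul_of_nonneg_left (hx i hi) (abs_nonneg _)

theorem exists_strongDual_comp_eq {V X : Type*} [AddCommGroup V] [Module ℝ V]
    [NormedAddCommGroup X] [NormedSpace ℝ X] (T : V →ₗ[ℝ] X) (σ : V →ₗ[ℝ] ℝ) (C : ℝ)
    (h : ∀ v, |σ v| ≤ C * ‖T v‖) : ∃ S : StrongDual ℝ X, ∀ v, S (T v) = σ v := by
  have hker : LinearMap.ker T ≤ LinearMap.ker σ := fun v hv => by
    simpa [LinearMap.mem_ker.1 hv] using h v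
  let g : LinearMap.range T →ₗ[ℝ] ℝ := (LinearMap.ker T).liftQ σ hker ∘ₗ T.quotKerEquivRange.symm
  have hg : ∀ v, g (T.rangeRestrict v) = σ v := fun v =>
    congrArg ((LinearMap.ker T).liftQ σ hker)
      (T.quotKerEquivRange.symm_apply_apply (Submodule.Quotient.mk v))
  have hbound : ∀ y, ‖g y‖ ≤ C * ‖y‖ := by
    rintro ⟨_, v, rfl⟩
    exact (hg v).symm ▸ h v
  obtain ⟨S, hS, -⟩ := exists_extension_norm_eq _ (g.mkContinuous C hbound)
  exact ⟨S, fun v => (hS (T.rangeRestrict v)).trans (hg v)⟩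

section Spreading

variable {X : Type} [NormedAddCommGroup X] [NormedSpace ℝ X] {e : ℕ → X}

variable (e) in
def HasBoundedSummingFunctional : Prop :=
  ∃ C : ℝ, 0 < C ∧ ∀ (k : ℕ) (a : ℕ → ℝ),
    |∑ i ∈ range k, a i| ≤ C * ‖∑ i ∈ range k, a i • e i‖

theorem exists_sum_eq_one_norm_lt_of_not_hasBoundedSummingFunctional
    (h : ¬HasBoundedSummingFunctional e) {δ : ℝ} (hδ : 0 < δ) :
    ∃ (k : ℕ) (a : ℕ → ℝ), ∑ i ∈ range k, a i = 1 ∧ ‖∑ i ∈ range k, a i • e i‖ < δ := by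
  unfold HasBoundedSummingFunctional at h
  push Not at h
  obtain ⟨k, a, hka⟩ := h δ⁻¹ (inv_pos.2 hδ)
  set s := ∑ i ∈ range k, a i
  have hs : s ≠ 0 := by
    rintro hs
    rw [hs, abs_zero] at hka
    exact hka.not_ge (by positivity)
  refine ⟨k, fun i => s⁻¹ * a i, by rw [← Finset.mul_sum, inv_mul_cancel₀ hs], ?_⟩
  simp_rw [mul_smul, ← Finset.smul_sum, norm_smul, norm_inv, Real.norm_eq_abs]
  rw [inv_mul_lt_iff₀ (abs_pos.2 hs)]
  rwa [inv_mul_lt_iff₀ hδ, mul_comm] at hka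

theorem HasBoundedSummingFunctional.exists_strongDual (h : HasBoundedSummingFunctional e) :
    ∃ S : StrongDual ℝ X, ∀ i, S (e i) = 1 := by
  obtain ⟨C, -, hC⟩ := h
  obtain ⟨S, hS⟩ := exists_strongDual_comp_eq (Finsupp.linearCombination ℝ e)
    (Finsupp.linearCombination ℝ fun _ => (1 : ℝ)) C fun a => by
      obtain ⟨k, hk⟩ := Finset.exists_nat_subset_range a.support
      simpa [Finsupp.linearCombination_apply, Finsupp.sum_of_support_subset a hk] using hC k a
  exact ⟨S, fun i => by simpa using hS (Finsupp.single i 1)⟩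

theorem IsSpreading.exists_norm_sum_comp_add_le (h : IsSpreading e) {m : ℕ → ℕ}
    (hm : StrictMono m) : ∃ C, 0 ≤ C ∧ ∀ (p k : ℕ) (a : ℕ → ℝ),
      ‖∑ i ∈ range k, a i • e (m (p + i))‖ ≤ C * ‖∑ i ∈ range k, a i • e (p + i)‖ := by
  obtain ⟨C, hC1, hC⟩ := h m hm
  refine ⟨C, by linarith, fun p k a => ?_⟩
  have hpad (g : ℕ → X) : ∑ i ∈ range (p + k), (if i < p then 0 else a (i - p)) • g i =
      ∑ i ∈ range k, a i • g (p + i) := by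
    rw [Finset.sum_range_add, Finset.sum_eq_zero fun i hi => by simp [Finset.mem_range.1 hi]]
    simp
  simpa only [hpad] using (hC (p + k) fun i => if i < p then 0 else a (i - p)).2

theorem IsSpreading.exists_sum_eq_one_norm_add_lt (h : IsSpreading e)
    (hb : ¬HasBoundedSummingFunctional e) (p : ℕ) {δ : ℝ} (hδ : 0 < δ) :
    ∃ (k : ℕ) (a : ℕ → ℝ), ∑ i ∈ range k, a i = 1 ∧ ‖∑ i ∈ range k, a i • e (p + i)‖ < δ := by
  obtain ⟨C, hC1, hC⟩ := h (p + ·) (strictMono_id.const_add p)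
  obtain ⟨k, a, ha, hsmall⟩ :=
    exists_sum_eq_one_norm_lt_of_not_hasBoundedSummingFunctional hb (div_pos hδ (by linarith))
  refine ⟨k, a, ha, (hC k a).2.trans_lt ?_⟩
  rwa [lt_div_iff₀ (by linarith), mul_comm] at hsmall

theorem IsSpreading.hasBoundedSummingFunctional_of_tendsto (h : IsSpreading e)
    (f : StrongDual ℝ X) {n : ℕ → ℕ} (hn : StrictMono n) {L : ℝ} (hL : L ≠ 0)
    (hlim : Tendsto (fun i => f (e (n i))) atTop (𝓝 L)) : HasBoundedSummingFunctional e := by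
  by_contra hb
  choose k a hsum hsmall using fun r : ℕ =>
    h.exists_sum_eq_one_norm_add_lt hb r (Nat.one_div_pos_of_nat (n := r))
  set ε : ℕ → ℝ := fun r => |L| / (2 * (∑ i ∈ range (k r), |a r i| + 1))
  have hεa (r : ℕ) : ε r * ∑ i ∈ range (k r), |a r i| ≤ |L| / 2 := by
    have hA : 0 ≤ ∑ i ∈ range (k r), |a r i| := Finset.sum_nonneg fun i _ => abs_nonneg _
    rw [div_mul_eq_mul_div, div_le_div_iff₀ (by positivity) two_pos]
    nlinarith [abs_nonneg L]
  -- Block `r` will occupy the positions `r, r + 1, …`, all of which are sent `ε r`-close to `L`.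
  obtain ⟨φ, hφ, hclose⟩ : ∃ φ : ℕ → ℕ, StrictMono φ ∧
      ∀ q, ∀ r ∈ range (q + 1), |f (e (n (φ q))) - L| ≤ ε r :=
    extraction_forall_of_eventually fun q => (eventually_all_finset _).2 fun r _ =>
      (Metric.tendsto_nhds.1 hlim (ε r) (by positivity)).mono fun j hj => hj.le
  obtain ⟨C, hC0, hC⟩ := h.exists_norm_sum_comp_add_le (hn.comp hφ)
  have hblock (r : ℕ) : |L| / 2 ≤ ‖f‖ * C * (1 / ((r : ℝ) + 1)) := by
    set v := ∑ i ∈ range (k r), a r i • e (n (φ (r + i)))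
    have hfv : |f v - L| ≤ |L| / 2 := by
      simp only [v, map_sum, map_smul, smul_eq_mul]
      refine (abs_sum_mul_sub_le (hsum r) fun i _ => hclose _ r ?_).trans (hεa r)
      simp
    have hv : ‖v‖ ≤ C * (1 / ((r : ℝ) + 1)) :=
      (hC r (k r) (a r)).trans (mul_le_mul_of_nonneg_left (hsmall r).le hC0)
    calc |L| / 2 ≤ |f v| := by linarith [abs_sub_abs_le_abs_sub L (f v), abs_sub_comm L (f v)]
      _ ≤ ‖f‖ * ‖v‖ := f.le_opNorm v
      _ ≤ ‖f‖ * C * (1 / ((r : ℝ) + 1)) := by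
        rw [mul_assoc]; exact mul_le_mul_of_nonneg_left hv (norm_nonneg f)
  have hzero := tendsto_one_div_add_atTop_nhds_zero_nat.const_mul (‖f‖ * C)
  rw [mul_zero] at hzero
  linarith [ge_of_tendsto' hzero hblock, abs_pos.2 hL]

end Spreading

theorem summing_functional_bounded_general
    {X : Type} [NormedAddCommGroup X] [NormedSpace ℝ X]
    (e : ℕ → X) (hnorm : ∀ i, ‖e i‖ = 1)
    (hspread : IsSpreading e) (hnwn : ¬ WeaklyNull e) :
    (∃ C : ℝ, 0 < C ∧ ∀ (k : ℕ) (a : ℕ → ℝ),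
        |∑ i ∈ Finset.range k, a i| ≤ C * ‖∑ i ∈ Finset.range k, a i • e i‖) ∧
    ∃ S : StrongDual ℝ X, ∀ i, S (e i) = 1 := by
  obtain ⟨f, hf⟩ : ∃ f : StrongDual ℝ X, ¬Tendsto (fun i => f (e i)) atTop (𝓝 0) := by
    simpa [WeaklyNull] using hnwn
  have hbdd : Bornology.IsBounded (Set.range fun i => f (e i)) := by
    refine isBounded_iff_forall_norm_le.2 ⟨‖f‖, ?_⟩
    rintro _ ⟨i, rfl⟩
    simpa [hnorm] using f.le_opNorm (e i)
  obtain ⟨L, hL, n, hn, hlim⟩ := exists_strictMono_tendsto_ne_of_not_tendsto hbdd hf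
  have hsum := hspread.hasBoundedSummingFunctional_of_tendsto f hn hL hlim
  exact ⟨hsum, hsum.exists_strongDual⟩

theorem summing_functional_bounded
    {X : Type} [NormedAddCommGroup X] [NormedSpace ℝ X] [CompleteSpace X]
    (e : ℕ → X) (hnorm : ∀ i, ‖e i‖ = 1) (hbasis : IsSchauderBasis e)
    (hspread : IsSpreading e) (hnwn : ¬ WeaklyNull e) :
    (∃ C : ℝ, 0 < C ∧ ∀ (k : ℕ) (a : ℕ → ℝ),
        |∑ i ∈ Finset.range k, a i| ≤ C * ‖∑ i ∈ Finset.range k, a i • e i‖) ∧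
    ∃ S : StrongDual ℝ X, ∀ i, S (e i) = 1 :=
  summing_functional_bounded_general e hnorm hspread hnwn
end

section
/- Let (e_i) be a normalized, 1-spreading, bimonotone Schauder basis of a Banach space X which is not weakly null, and let S be the summing functional. If (x_i) is a normalized block basis of (e_i) with S(x_i) = 0 for all i, then (x_i) is suppression 1-unconditional: for every n, all scalars a_1,…,a_n, and every subset F ⊆ {1,…,n}, ‖Σ_{i∈F} a_i x_i‖ ≤ ‖Σ_{i=1}^n a_i x_i‖. -/
open Filter Finset Topology NormedSpace
open scoped NNReal

/-- `e` is `1`-spreading. -/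
def IsOneSpreading {X : Type} [NormedAddCommGroup X] [NormedSpace ℝ X] (e : ℕ → X) : Prop :=
  ∀ (k : ℕ) (a : ℕ → ℝ) (n : ℕ → ℕ), StrictMono n →
    ‖∑ i ∈ Finset.range k, a i • e (n i)‖ = ‖∑ i ∈ Finset.range k, a i • e i‖

/-- `e` is bimonotone: interval projections of (finitely supported) expansions have norm
at most the norm of the whole vector. -/
def IsBimonotone {X : Type} [NormedAddCommGroup X] [NormedSpace ℝ X] (e : ℕ → X) : Prop :=
  ∀ (N m n : ℕ) (a : ℕ → ℝ),
    ‖∑ i ∈ (Finset.range N).filter (fun i => m ≤ i ∧ i ≤ n), a i • e i‖ ≤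
      ‖∑ i ∈ Finset.range N, a i • e i‖

/-- `x` is a block basis of `e`: each `x j` is a nonzero vector finitely supported on an
interval of indices, with successive supports strictly increasing. -/
def IsBlockBasis {X : Type} [NormedAddCommGroup X] [NormedSpace ℝ X]
    (e : ℕ → X) (x : ℕ → X) : Prop :=
  ∃ (a : ℕ → ℕ → ℝ) (p q : ℕ → ℕ),
    (∀ j, x j = ∑ i ∈ Finset.Icc (p j) (q j), a j i • e i) ∧
    (∀ j, x j ≠ 0) ∧ (∀ j, p j ≤ q j) ∧ (∀ j, q j < p (j + 1))

/-!
By 1-spreading, moving the coordinates of a vector to new increasing positions does not change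
its norm. To delete one zero-sum block from `∑ a i • x i`, shift that block by `0, 1, …, N - 1`
while the blocks before it stay put and those after it move beyond all the copies. The `N`
resulting vectors all have the norm of the original one, and their sum is `N` times the vector
with the block deleted plus `N` shifted copies of a zero-sum block. These telescope, so their sum
stays bounded as `N` grows; dividing by `N` and letting `N → ∞` deletes the block without
increasing the norm, and removing the blocks outside `F` one at a time gives the theorem.
-/

theorem le_of_forall_nat_mul_le_mul_add {a b K : ℝ} (h : ∀ N : ℕ, N * a ≤ N * b + K) :
    a ≤ b := by
  by_contra! hab
  obtain ⟨N, hN⟩ := exists_nat_gt (K / (a - b))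
  rw [div_lt_iff₀ (sub_pos.2 hab)] at hN
  linarith [h N]

theorem Finset.le_of_subset_of_forall_erase_le {ι : Type*} [DecidableEq ι] {φ : Finset ι → ℝ}
    (hφ : ∀ G j, j ∈ G → φ (G.erase j) ≤ φ G) {F G : Finset ι} (hFG : F ⊆ G) : φ F ≤ φ G := by
  induction G using Finset.strongInduction generalizing F with
  | H G ih =>
    obtain rfl | hFG := hFG.eq_or_ssubset
    · exact le_rfl
    obtain ⟨j, hjG, hjF⟩ := Finset.exists_of_ssubset hFG
    exact (ih _ (erase_ssubset hjG) (subset_erase.2 ⟨hFG.subset, hjF⟩)).trans (hφ G j hjG)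

theorem norm_sum_range_add_sub_sum_range_le {E : Type*} [SeminormedAddCommGroup E]
    {f : ℕ → E} {C : ℝ} (hf : ∀ i, ‖f i‖ ≤ C) (d N : ℕ) :
    ‖∑ n ∈ range N, f (d + n) - ∑ n ∈ range N, f n‖ ≤ 2 * d * C := by
  have hshift : ∑ n ∈ range N, f (d + n) - ∑ n ∈ range N, f n =
      ∑ n ∈ range d, f (N + n) - ∑ n ∈ range d, f n := by
    have h₁ := sum_range_add f d N
    have h₂ := sum_range_add f N d
    rw [add_comm N d] at h₂
    rw [sub_eq_sub_iff_add_eq_add, add_comm, ← h₁, h₂, add_comm]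
  have hbound : ∀ g : ℕ → ℕ, ‖∑ n ∈ range d, f (g n)‖ ≤ d * C := fun g =>
    (norm_sum_le _ _).trans ((sum_le_sum fun n _ => hf (g n)).trans_eq (by simp))
  calc _ = ‖∑ n ∈ range d, f (N + n) - ∑ n ∈ range d, f n‖ := by rw [hshift]
    _ ≤ d * C + d * C := (norm_sub_le _ _).trans (add_le_add (hbound _) (hbound _))
    _ = 2 * d * C := by ring

namespace IsOneSpreading

variable {X : Type} [NormedAddCommGroup X] [NormedSpace ℝ X] {e : ℕ → X}

theorem norm_sum_comp (he : IsOneSpreading e) (A : Finset ℕ) (c : ℕ → ℝ) {ν : ℕ → ℕ}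
    (hν : StrictMono ν) : ‖∑ i ∈ A, c i • e (ν i)‖ = ‖∑ i ∈ A, c i • e i‖ := by
  obtain ⟨k, hk⟩ := A.exists_nat_subset_range
  have hA : ∀ f : ℕ → X,
      ∑ i ∈ A, c i • f i = ∑ i ∈ range k, (if i ∈ A then c i else 0) • f i := by
    intro f
    simp_rw [ite_smul, zero_smul]
    rw [sum_ite_mem, inter_eq_right.2 hk]
  rw [hA, hA]
  exact he k _ ν hν

theorem norm_eq (he : IsOneSpreading e) (i : ℕ) : ‖e i‖ = ‖e 0‖ := by
  simpa using he.norm_sum_comp {0} (fun _ => 1) (strictMono_id.add_const i)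

theorem norm_sum_range_sum_add_le (he : IsOneSpreading e) (B : Finset ℕ) {c : ℕ → ℝ}
    (hc : ∑ i ∈ B, c i = 0) (N : ℕ) :
    ‖∑ n ∈ range N, ∑ i ∈ B, c i • e (i + n)‖ ≤ ∑ i ∈ B, |c i| * (2 * i * ‖e 0‖) := by
  -- subtracting `(∑ i ∈ B, c i) • ∑ n ∈ range N, e n = 0` turns each window into a telescoping
  -- difference
  have htel : ∑ n ∈ range N, ∑ i ∈ B, c i • e (i + n) =
      ∑ i ∈ B, c i • (∑ n ∈ range N, e (i + n) - ∑ n ∈ range N, e n) := by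
    simp_rw [smul_sub, sum_sub_distrib, ← sum_smul, hc, zero_smul, sub_zero, smul_sum]
    exact sum_comm
  rw [htel]
  refine (norm_sum_le _ _).trans (sum_le_sum fun i _ => ?_)
  rw [norm_smul, Real.norm_eq_abs]
  exact mul_le_mul_of_nonneg_left
    (norm_sum_range_add_sub_sum_range_le (fun n => (he.norm_eq n).le) i N) (abs_nonneg _)

theorem norm_sum_sdiff_Icc_le (he : IsOneSpreading e) (A : Finset ℕ) {c : ℕ → ℝ} {s t : ℕ}
    (hc : ∑ i ∈ A ∩ Icc s t, c i = 0) :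
    ‖∑ i ∈ A \ Icc s t, c i • e i‖ ≤ ‖∑ i ∈ A, c i • e i‖ := by
  refine le_of_forall_nat_mul_le_mul_add
    (K := ∑ i ∈ A ∩ Icc s t, |c i| * (2 * i * ‖e 0‖)) fun N => ?_
  let ν : ℕ → ℕ → ℕ := fun j i => if i < s then i else if i ≤ t then i + j else i + N
  have hν : ∀ j ≤ N, StrictMono (ν j) := fun j hj =>
    strictMono_nat_of_lt_succ fun i => by simp only [ν]; split_ifs <;> omega
  have hsplit : ∀ j, ∑ i ∈ A, c i • e (ν j i) =
      ∑ i ∈ A \ Icc s t, c i • e (ν 0 i) + ∑ i ∈ A ∩ Icc s t, c i • e (i + j) := by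
    intro j
    rw [← sum_inter_add_sum_sdiff A (Icc s t), add_comm]
    congr 1 <;> refine sum_congr rfl fun i hi => ?_ <;>
      simp only [Finset.mem_sdiff, mem_inter, mem_Icc] at hi <;> simp only [ν] <;> split_ifs <;>
      first | rfl | omega
  calc (N : ℝ) * ‖∑ i ∈ A \ Icc s t, c i • e i‖
      = ‖∑ _j ∈ range N, ∑ i ∈ A \ Icc s t, c i • e (ν 0 i)‖ := by
        rw [sum_const, card_range, RCLike.norm_nsmul ℝ, he.norm_sum_comp _ _ (hν 0 N.zero_le),
          nsmul_eq_mul]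
    _ = ‖∑ j ∈ range N, ∑ i ∈ A, c i • e (ν j i) -
          ∑ j ∈ range N, ∑ i ∈ A ∩ Icc s t, c i • e (i + j)‖ := by
        simp_rw [hsplit, sum_add_distrib, add_sub_cancel_right]
    _ ≤ N * ‖∑ i ∈ A, c i • e i‖ + ∑ i ∈ A ∩ Icc s t, |c i| * (2 * i * ‖e 0‖) := by
        refine (norm_sub_le _ _).trans (add_le_add ?_ (he.norm_sum_range_sum_add_le _ hc N))
        refine (norm_sum_le _ _).trans_eq ?_
        rw [sum_congr rfl fun j hj => he.norm_sum_comp A c (hν j (mem_range.1 hj).le),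
          sum_const, card_range, nsmul_eq_mul]

end IsOneSpreading

theorem right_lt_left_of_lt {p q : ℕ → ℕ} (hpq : ∀ j, p j ≤ q j) (hqp : ∀ j, q j < p (j + 1))
    {t t' : ℕ} (h : t < t') : q t < p t' := by
  have hq : StrictMono q := strictMono_nat_of_lt_succ fun j => (hqp j).trans_le (hpq _)
  obtain ⟨d, rfl⟩ := Nat.exists_eq_add_of_lt h
  exact (hq.monotone (Nat.le_add_right t d)).trans_lt (hqp _)

namespace IsBlockBasis

variable {X : Type} [NormedAddCommGroup X] [NormedSpace ℝ X] {e x : ℕ → X}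

theorem norm_sum_erase_le (hx : IsBlockBasis e x) (he : IsOneSpreading e) {S : StrongDual ℝ X}
    (hS : ∀ i, S (e i) = 1) (hSx : ∀ j, S (x j) = 0) (b : ℕ → ℝ) {G : Finset ℕ} {j : ℕ}
    (hjG : j ∈ G) :
    ‖∑ t ∈ G.erase j, b t • x t‖ ≤ ‖∑ t ∈ G, b t • x t‖ := by
  obtain ⟨w, p, q, hxw, -, hpq, hqp⟩ := hx
  set N := G.sup q + 1
  have hIcc : ∀ t ∈ G, range N ∩ Icc (p t) (q t) = Icc (p t) (q t) := fun t ht =>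
    inter_eq_right.2 fun i hi => mem_range.2 <|
      Nat.lt_succ_of_le ((mem_Icc.1 hi).2.trans (le_sup (f := q) ht))
  set C : ℕ → ℝ := fun i => ∑ t ∈ G, if i ∈ Icc (p t) (q t) then b t * w t i else 0
  have hsum : ∑ t ∈ G, b t • x t = ∑ i ∈ range N, C i • e i := by
    simp_rw [C, sum_smul, ite_smul, zero_smul]
    rw [sum_comm]
    refine sum_congr rfl fun t ht => ?_
    rw [sum_ite_mem, hIcc t ht, hxw, smul_sum]
    simp_rw [smul_smul]
  have hCj : ∀ i ∈ Icc (p j) (q j), C i = b j * w j i := by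
    intro i hi
    refine (sum_eq_single_of_mem j hjG fun t _ htj => if_neg ?_).trans (if_pos hi)
    rw [mem_Icc] at hi ⊢
    rcases htj.lt_or_gt with h | h <;> have := right_lt_left_of_lt hpq hqp h <;> omega
  have hbj : b j • x j = ∑ i ∈ range N ∩ Icc (p j) (q j), C i • e i := by
    rw [hIcc j hjG, hxw, smul_sum]
    exact sum_congr rfl fun i hi => by rw [hCj i hi, mul_smul]
  have hzero : ∑ i ∈ range N ∩ Icc (p j) (q j), C i = 0 := by
    rw [hIcc j hjG, sum_congr rfl hCj, ← mul_sum, ← mul_zero (b j), ← hSx j, hxw, map_sum]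
    simp_rw [map_smul, hS, smul_eq_mul, mul_one]
  calc ‖∑ t ∈ G.erase j, b t • x t‖ = ‖∑ i ∈ range N \ Icc (p j) (q j), C i • e i‖ := by
        rw [sum_erase_eq_sub hjG, hsum, hbj, ← sum_inter_add_sum_sdiff (range N) (Icc (p j) (q j)),
          add_sub_cancel_left]
    _ ≤ ‖∑ t ∈ G, b t • x t‖ := hsum ▸ he.norm_sum_sdiff_Icc_le _ hzero

end IsBlockBasis

theorem zero_sum_blocks_suppression_unconditional_general
    {X : Type} [NormedAddCommGroup X] [NormedSpace ℝ X]
    (e : ℕ → X)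
    (hspread : IsOneSpreading e)
    (S : StrongDual ℝ X) (hS : ∀ i, S (e i) = 1)
    (x : ℕ → X) (hblock : IsBlockBasis e x)
    (hSx : ∀ j, S (x j) = 0) :
    ∀ (n : ℕ) (a : ℕ → ℝ) (F : Finset ℕ), F ⊆ Finset.range n →
      ‖∑ i ∈ F, a i • x i‖ ≤ ‖∑ i ∈ Finset.range n, a i • x i‖ :=
  fun _ a _ hF => Finset.le_of_subset_of_forall_erase_le (φ := fun G => ‖∑ i ∈ G, a i • x i‖)
    (fun _ _ => hblock.norm_sum_erase_le hspread hS hSx a) hF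

theorem zero_sum_blocks_suppression_unconditional
    {X : Type} [NormedAddCommGroup X] [NormedSpace ℝ X] [CompleteSpace X]
    (e : ℕ → X) (hnorm : ∀ i, ‖e i‖ = 1) (hbasis : IsSchauderBasis e)
    (hspread : IsOneSpreading e) (hbi : IsBimonotone e) (hnwn : ¬ WeaklyNull e)
    (S : StrongDual ℝ X) (hS : ∀ i, S (e i) = 1)
    (x : ℕ → X) (hblock : IsBlockBasis e x) (hxnorm : ∀ j, ‖x j‖ = 1)
    (hSx : ∀ j, S (x j) = 0) :
    ∀ (n : ℕ) (a : ℕ → ℝ) (F : Finset ℕ), F ⊆ Finset.range n →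
      ‖∑ i ∈ F, a i • x i‖ ≤ ‖∑ i ∈ Finset.range n, a i • x i‖ :=
  zero_sum_blocks_suppression_unconditional_general e hspread S hS x hblock hSx
end

section
/- Let (e_i) be a normalized, 1-spreading, bimonotone Schauder basis of a Banach space X which is not weakly null, with summing functional S of norm 1, and let (x_i) be a normalized block basis of (e_i) with S(x_i) = 0 for all i. Then for every ε > 0 and every i_0 ∈ ℕ there exists m ∈ ℕ such that for every f ∈ X* with ‖f‖ = 1 there exists a vector x̃ which is a spread of x_{i_0} with supp(x̃) ⊆ [j, m], where j = min supp(x_{i_0}), such that |f(x̃)| < ε. -/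
open Filter Finset Topology NormedSpace
open scoped NNReal

/-!
Since `S` vanishes on `x_{i₀} = ∑ aᵢ eᵢ`, the coefficients sum to zero, so
`f(∑ aᵢ e_{mᵢ}) = ∑ aᵢ (f(e_{mᵢ}) - c)` for every constant `c`. The values `f(eₜ)` lie in `[-1, 1]`,
so by pigeonhole on bins of width `δ`, among a number of consecutive indices bounded independently
of `f` there are as many as `x_{i₀}` has coefficients, all with values in one bin. Spreading `x_{i₀}`
onto them gives `|f(x̃)| ≤ δ ∑ |aᵢ| < ε`.
-/

lemma sub_natFloor_div_mul_mem_Ico {x δ : ℝ} (hx : 0 ≤ x) (hδ : 0 < δ) :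
    x - ⌊x / δ⌋₊ * δ ∈ Set.Ico 0 δ := by
  have hle : (⌊x / δ⌋₊ : ℝ) * δ ≤ x := (le_div_iff₀ hδ).mp (Nat.floor_le (by positivity))
  have hlt : x < (⌊x / δ⌋₊ + 1) * δ := (div_lt_iff₀ hδ).mp (Nat.lt_floor_add_one _)
  constructor <;> linarith

-- pigeonhole on the bins `[bδ - M, (b + 1)δ - M)`
lemma exists_orderEmbedding_close {M δ : ℝ} (hδ : 0 < δ) (r : ℕ) :
    ∃ N : ℕ, ∀ (j : ℕ) (g : ℕ → ℝ), (∀ t, |g t| ≤ M) →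
      ∃ (n : Fin r ↪o ℕ) (c : ℝ), ∀ k, n k ∈ Set.Icc j (j + N) ∧ |g (n k) - c| ≤ δ := by
  set K := ⌊2 * M / δ⌋₊ + 1
  refine ⟨r * K, fun j g hg => ?_⟩
  set bin : ℕ → ℕ := fun t => ⌊(g t + M) / δ⌋₊
  have hbin : ∀ t ∈ Icc j (j + r * K), bin t ∈ range K := by
    intro t _
    have := (abs_le.mp (hg t)).2
    have : bin t ≤ ⌊2 * M / δ⌋₊ := Nat.floor_le_floor (by gcongr; linarith)
    simp only [mem_range]
    omega
  have hcard : #(range K) * (r - 1) < #(Icc j (j + r * K)) := by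
    rw [card_range, Nat.card_Icc]
    have : K * (r - 1) ≤ r * K := by rw [mul_comm]; exact Nat.mul_le_mul_right _ (Nat.sub_le _ _)
    omega
  obtain ⟨b, -, hb⟩ := exists_lt_card_fiber_of_mul_lt_card_of_maps_to hbin hcard
  obtain ⟨F, hFsub, hFcard⟩ :=
    exists_subset_card_eq (show r ≤ #{t ∈ Icc j (j + r * K) | bin t = b} by omega)
  refine ⟨F.orderEmbOfFin hFcard, b * δ - M, fun k => ?_⟩
  have hmem := mem_filter.mp (hFsub (F.orderEmbOfFin_mem hFcard k))
  refine ⟨mem_Icc.mp hmem.1, ?_⟩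
  have hshift := sub_natFloor_div_mul_mem_Ico (x := g (F.orderEmbOfFin hFcard k) + M)
    (by linarith [(abs_le.mp (hg (F.orderEmbOfFin hFcard k))).1]) hδ
  rw [show ⌊_⌋₊ = b from hmem.2] at hshift
  rw [abs_le]
  constructor <;> linarith [hshift.1, hshift.2]

lemma Finset.exists_strictMonoOn_mapsTo_range {α β : Type*} [LinearOrder α] [Preorder β]
    [Inhabited β] (s : Finset α) (n : Fin #s ↪o β) :
    ∃ f : α → β, StrictMonoOn f s ∧ ∀ i ∈ s, f i ∈ Set.range n := by
  classical
  refine ⟨fun i => if h : i ∈ s then n ((s.orderIsoOfFin rfl).symm ⟨i, h⟩) else default,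
    fun i hi i' hi' hii' => ?_, fun i hi => ?_⟩
  · simp only [mem_coe] at hi hi'
    simp only [dif_pos hi, dif_pos hi']
    exact n.strictMono ((s.orderIsoOfFin rfl).symm.strictMono (Subtype.mk_lt_mk.mpr hii'))
  · simp only [dif_pos hi, Set.mem_range_self]

lemma abs_sum_mul_le_of_sum_eq_zero {ι : Type*} (s : Finset ι) {a y : ι → ℝ} {c δ : ℝ}
    (ha : ∑ i ∈ s, a i = 0) (hy : ∀ i ∈ s, |y i - c| ≤ δ) :
    |∑ i ∈ s, a i * y i| ≤ (∑ i ∈ s, |a i|) * δ := by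
  have hshift : ∑ i ∈ s, a i * y i = ∑ i ∈ s, a i * (y i - c) := by
    simp only [mul_sub, sum_sub_distrib, ← sum_mul, ha, zero_mul, sub_zero]
  calc |∑ i ∈ s, a i * y i| ≤ ∑ i ∈ s, |a i| * |y i - c| := by
        rw [hshift]; exact (abs_sum_le_sum_abs _ _).trans_eq (by simp only [abs_mul])
    _ ≤ ∑ i ∈ s, |a i| * δ := sum_le_sum fun i hi => by gcongr; exact hy i hi
    _ = (∑ i ∈ s, |a i|) * δ := (sum_mul ..).symm

theorem unconditionality_lemma_general
    {X : Type} [NormedAddCommGroup X] [NormedSpace ℝ X]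
    (e : ℕ → X) (hnorm : ∀ i, ‖e i‖ = 1)
    (S : StrongDual ℝ X) (hS : ∀ i, S (e i) = 1)
    -- `x` is a normalized block basis of `e` with coefficients `a` and supports in
    -- `[p j, q j]`, whose minimum is attained at `p j`
    (x : ℕ → X) (a : ℕ → ℕ → ℝ) (p q : ℕ → ℕ)
    (hx : ∀ j, x j = ∑ i ∈ Finset.Icc (p j) (q j), a j i • e i)
    (hSx : ∀ j, S (x j) = 0) :
    ∀ ε : ℝ, 0 < ε → ∀ i₀ : ℕ, ∃ m : ℕ, ∀ f : StrongDual ℝ X, ‖f‖ = 1 →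
      ∃ mm : ℕ → ℕ, StrictMonoOn mm (Set.Icc (p i₀) (q i₀)) ∧
        (∀ i ∈ Finset.Icc (p i₀) (q i₀), p i₀ ≤ mm i ∧ mm i ≤ m) ∧
        |f (∑ i ∈ Finset.Icc (p i₀) (q i₀), a i₀ i • e (mm i))| < ε := by
  intro ε hε i₀
  set s := Icc (p i₀) (q i₀)
  have hsum : ∑ i ∈ s, a i₀ i = 0 := by simpa [hx, hS] using hSx i₀
  set C := ∑ i ∈ s, |a i₀ i|
  have hC : 0 ≤ C := sum_nonneg fun i _ => abs_nonneg _
  have hδ : 0 < ε / (C + 1) := by positivity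
  obtain ⟨N, hN⟩ := exists_orderEmbedding_close (M := 1) hδ #s
  refine ⟨p i₀ + N, fun f hf => ?_⟩
  have hfe : ∀ t, |f (e t)| ≤ 1 := fun t => by
    simpa [hf, hnorm] using f.le_opNorm (e t)
  obtain ⟨n, c, hn⟩ := hN (p i₀) (fun t => f (e t)) hfe
  obtain ⟨mm, hmono, hrange⟩ := s.exists_strictMonoOn_mapsTo_range n
  have hmm : ∀ i ∈ s, mm i ∈ Set.Icc (p i₀) (p i₀ + N) ∧ |f (e (mm i)) - c| ≤ ε / (C + 1) :=
    fun i hi => by obtain ⟨k, hk⟩ := hrange i hi; exact hk ▸ hn k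
  refine ⟨mm, by simpa [s] using hmono, fun i hi => (hmm i hi).1, ?_⟩
  calc |f (∑ i ∈ s, a i₀ i • e (mm i))| = |∑ i ∈ s, a i₀ i * f (e (mm i))| := by simp
    _ ≤ C * (ε / (C + 1)) := abs_sum_mul_le_of_sum_eq_zero s hsum fun i hi => (hmm i hi).2
    _ < ε := by rw [mul_div_assoc', div_lt_iff₀ (by positivity)]; linarith

theorem unconditionality_lemma
    {X : Type} [NormedAddCommGroup X] [NormedSpace ℝ X] [CompleteSpace X]
    (e : ℕ → X) (hnorm : ∀ i, ‖e i‖ = 1) (hbasis : IsSchauderBasis e)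
    (hspread : IsOneSpreading e) (hbi : IsBimonotone e) (hnwn : ¬ WeaklyNull e)
    (S : StrongDual ℝ X) (hS : ∀ i, S (e i) = 1) (hSnorm : ‖S‖ = 1)
    -- `x` is a normalized block basis of `e` with coefficients `a` and supports in
    -- `[p j, q j]`, whose minimum is attained at `p j`
    (x : ℕ → X) (a : ℕ → ℕ → ℝ) (p q : ℕ → ℕ)
    (hx : ∀ j, x j = ∑ i ∈ Finset.Icc (p j) (q j), a j i • e i)
    (hpq : ∀ j, p j ≤ q j) (hgap : ∀ j, q j < p (j + 1))
    (hminsupp : ∀ j, a j (p j) ≠ 0)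
    (hxnorm : ∀ j, ‖x j‖ = 1) (hSx : ∀ j, S (x j) = 0) :
    ∀ ε : ℝ, 0 < ε → ∀ i₀ : ℕ, ∃ m : ℕ, ∀ f : StrongDual ℝ X, ‖f‖ = 1 →
      ∃ mm : ℕ → ℕ, StrictMonoOn mm (Set.Icc (p i₀) (q i₀)) ∧
        (∀ i ∈ Finset.Icc (p i₀) (q i₀), p i₀ ≤ mm i ∧ mm i ≤ m) ∧
        |f (∑ i ∈ Finset.Icc (p i₀) (q i₀), a i₀ i • e (mm i))| < ε :=
  unconditionality_lemma_general e hnorm S hS x a p q hx hSx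
end

section
/- Let (e_i) be a normalized, 1-spreading, bimonotone Schauder basis of a Banach space X which is not weakly null. Define the difference sequence (d_i) by d_1 = e_1 and d_i = e_i − e_{i−1} for i ≥ 2. Then (d_i) is a Schauder basis for X, and it is skipped unconditional: every skipped block basis of (d_i) is unconditional. -/
open Filter Finset Topology NormedSpace
open scoped NNReal

/-- `x` is a skipped block basis of `e`: a block basis leaving a gap of at least one index
between consecutive supports. -/
def IsSkippedBlockBasis {X : Type} [NormedAddCommGroup X] [NormedSpace ℝ X]
    (e : ℕ → X) (x : ℕ → X) : Prop :=
  ∃ (a : ℕ → ℕ → ℝ) (p q : ℕ → ℕ),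
    (∀ j, x j = ∑ i ∈ Finset.Icc (p j) (q j), a j i • e i) ∧
    (∀ j, x j ≠ 0) ∧ (∀ j, p j ≤ q j) ∧ (∀ j, q j + 1 < p (j + 1))

/-- A sequence is unconditional if sign changes of coefficients are uniformly bounded. -/
def IsUnconditionalSeq {X : Type} [NormedAddCommGroup X] [NormedSpace ℝ X] (x : ℕ → X) : Prop :=
  ∃ C : ℝ, 0 < C ∧ ∀ (k : ℕ) (a ε : ℕ → ℝ), (∀ i, ε i = 1 ∨ ε i = -1) →
    ‖∑ i ∈ Finset.range k, (ε i * a i) • x i‖ ≤ C * ‖∑ i ∈ Finset.range k, a i • x i‖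

/-!
Fix a functional `f` and a subsequence with `f (e (θ m)) → c ≠ 0`, which exists because `(e i)`
is bounded and not weakly null. Spreading turns this into the summing estimate
`|∑ aᵢ| ≤ K ‖∑ aᵢ • eᵢ‖`, so the partial coefficient sums of an `e`-expansion converge, and their
tails `σ - ∑_{i<n} aᵢ` are the `d`-coefficients; bimonotonicity makes them unique.

In `e`-coordinates a skipped block of `(d i)` is a block of `(e i)` whose coefficients sum to zero,
except possibly the first one. If `‖∑_{l<n} (e (2l+1) - e (2l))‖ ≥ η n` for all `n`, then `(e i)`
is equivalent to the `ℓ₁` basis and every block sequence is unconditional. Otherwise, averaging `n`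
spread-out copies of a zero-sum block shows that deleting it does not increase the norm, and the
first block is removed by an interval projection: block sequences are then `1`-suppression
unconditional.
-/

open Function

theorem sum_le_mul_card_filter_add {ι : Type*} (s : Finset ι) {f : ι → ℝ} {M c : ℝ}
    (hf : ∀ i ∈ s, f i ≤ M) (hc : 0 ≤ c) :
    ∑ i ∈ s, f i ≤ M * #(s.filter (c ≤ f ·)) + c * #s := by
  rw [← sum_filter_add_sum_filter_not s (c ≤ f ·)]
  gcongr
  · simpa [mul_comm] using sum_le_card_nsmul _ _ _ fun i hi => hf i (mem_filter.1 hi).1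
  · calc ∑ i ∈ s.filter (¬c ≤ f ·), f i ≤ #(s.filter (¬c ≤ f ·)) • c :=
          sum_le_card_nsmul _ _ _ fun i hi => (not_le.1 (mem_filter.1 hi).2).le
      _ ≤ c * #s := by
          rw [nsmul_eq_mul, mul_comm]
          exact mul_le_mul_of_nonneg_left (by exact_mod_cast card_filter_le _ _) hc

theorem sum_smul_eq_sum_partialSum_smul_sub {E : Type*} [AddCommGroup E] [Module ℝ E]
    (φ : ℕ → ℝ) (V : ℕ → E) (r : ℕ) :
    ∑ u ∈ range (r + 1), φ u • V u =
      ∑ u ∈ range r, (∑ t ∈ range (u + 1), φ t) • (V u - V (u + 1)) +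
        (∑ t ∈ range (r + 1), φ t) • V r := by
  induction r with
  | zero => simp
  | succ r ih =>
    rw [sum_range_succ (fun u => φ u • V u) (r + 1), ih,
      sum_range_succ (fun u => (∑ t ∈ range (u + 1), φ t) • (V u - V (u + 1))) r,
      sum_range_succ φ (r + 1), smul_sub, add_smul]
    abel

theorem norm_sum_smul_le_of_sum_eq_zero {E : Type*} [SeminormedAddCommGroup E]
    [NormedSpace ℝ E] {φ : ℕ → ℝ} {V : ℕ → E} {m : ℕ} {C : ℝ} (hφ : ∑ u ∈ range m, φ u = 0)
    (hC : 0 ≤ C) (hV : ∀ u, u + 1 < m → ‖V u - V (u + 1)‖ ≤ C) :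
    ‖∑ u ∈ range m, φ u • V u‖ ≤ (∑ u ∈ range m, |∑ t ∈ range (u + 1), φ t|) * C := by
  cases m with
  | zero => simp
  | succ r =>
    rw [sum_smul_eq_sum_partialSum_smul_sub, hφ, zero_smul, add_zero, sum_mul]
    calc _ ≤ ∑ u ∈ range r, ‖(∑ t ∈ range (u + 1), φ t) • (V u - V (u + 1))‖ := norm_sum_le _ _
      _ ≤ ∑ u ∈ range r, |∑ t ∈ range (u + 1), φ t| * C := sum_le_sum fun u hu => by
          rw [norm_smul, Real.norm_eq_abs]
          exact mul_le_mul_of_nonneg_left (hV u (by simpa using hu)) (abs_nonneg _)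
      _ ≤ _ := sum_le_sum_of_subset_of_nonneg (range_subset_range.2 r.le_succ)
          fun _ _ _ => by positivity

theorem norm_sum_ite_le_of_norm_sum_update_le {E : Type*} [SeminormedAddCommGroup E]
    [Module ℝ E] {x : ℕ → E}
    (h : ∀ k (c : ℕ → ℝ) j, ‖∑ i ∈ range k, update c j 0 i • x i‖ ≤ ‖∑ i ∈ range k, c i • x i‖)
    (k : ℕ) (c : ℕ → ℝ) (T : Finset ℕ) :
    ‖∑ i ∈ range k, (if i ∈ T then 0 else c i) • x i‖ ≤ ‖∑ i ∈ range k, c i • x i‖ := by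
  induction T using Finset.induction_on with
  | empty => simp
  | insert j T _ ih =>
    have hupd : (fun i => if i ∈ insert j T then 0 else c i) =
        update (fun i => if i ∈ T then 0 else c i) j 0 := by
      funext i
      by_cases hij : i = j
      · simp [hij]
      · simp [hij, update_of_ne]
    exact (hupd ▸ h k _ j).trans ih

section

variable {X : Type} [NormedAddCommGroup X] [NormedSpace ℝ X]

theorem IsOneSpreading.norm_sum_comp_of_strictMonoOn {e : ℕ → X} (hs : IsOneSpreading e)
    {k : ℕ} {σ : ℕ → ℕ} (hσ : StrictMonoOn σ (Set.Iio k)) (a : ℕ → ℝ) :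
    ‖∑ i ∈ range k, a i • e (σ i)‖ = ‖∑ i ∈ range k, a i • e i‖ := by
  set M := ∑ i ∈ range k, σ i
  have hσM : ∀ i < k, σ i ≤ M := fun i hi =>
    single_le_sum (f := σ) (fun _ _ => Nat.zero_le _) (mem_range.2 hi)
  have hmono : StrictMono fun i => if i < k then σ i else M + i := by
    intro i j hij
    dsimp only
    split_ifs with hi hj hj
    · exact hσ hi hj hij
    · have := hσM i hi; omega
    · omega
    · omega
  rw [← hs k a _ hmono]
  congr 1
  exact sum_congr rfl fun i hi => by rw [if_pos (mem_range.1 hi)]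

def pairedDiffSum (e : ℕ → X) (n : ℕ) : X := ∑ l ∈ range n, (e (2 * l + 1) - e (2 * l))

theorem sum_range_succ_sub_eq_sum_range_two_mul (e : ℕ → X) (s : ℕ → ℕ) (n : ℕ) :
    ∑ l ∈ range n, (e (s l + 1) - e (s l)) =
      ∑ i ∈ range (2 * n), (if i % 2 = 0 then -1 else 1 : ℝ) • e (s (i / 2) + i % 2) := by
  induction n with
  | zero => simp
  | succ n ih =>
    rw [sum_range_succ, ih, show 2 * (n + 1) = 2 * n + 1 + 1 by ring, sum_range_succ,
      sum_range_succ, add_assoc]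
    congr 1
    have h1 : (2 * n + 1) / 2 = n := by omega
    have h2 : (2 * n + 1) % 2 = 1 := by omega
    simp [h1, h2, sub_eq_neg_add]

theorem IsOneSpreading.norm_sum_succ_sub_eq {e : ℕ → X} (hs : IsOneSpreading e) {s : ℕ → ℕ}
    (hgap : ∀ l, s l + 1 < s (l + 1)) (n : ℕ) :
    ‖∑ l ∈ range n, (e (s l + 1) - e (s l))‖ = ‖pairedDiffSum e n‖ := by
  have hmono : ∀ t : ℕ → ℕ, (∀ l, t l + 1 < t (l + 1)) →
      StrictMono fun i => t (i / 2) + i % 2 := by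
    intro t ht
    refine strictMono_nat_of_lt_succ fun i => ?_
    rcases Nat.even_or_odd' i with ⟨l, rfl | rfl⟩
    · have h1 : (2 * l + 1) / 2 = l := by omega
      simp [h1]
    · have h1 : (2 * l + 1 + 1) / 2 = l + 1 := by omega
      have h2 : (2 * l + 1) / 2 = l := by omega
      have h3 : (2 * l + 1) % 2 = 1 := by omega
      have h4 : (2 * l + 1 + 1) % 2 = 0 := by omega
      simpa only [h1, h2, h3, h4, add_zero] using ht l
  rw [pairedDiffSum, sum_range_succ_sub_eq_sum_range_two_mul e s,
    sum_range_succ_sub_eq_sum_range_two_mul e (2 * ·), hs _ _ _ (hmono s hgap),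
    hs _ _ _ (hmono _ fun l => by omega)]

theorem exists_tendsto_ne_zero_of_not_weaklyNull {e : ℕ → X} {M : ℝ} (hM : ∀ i, ‖e i‖ ≤ M)
    (hnwn : ¬ WeaklyNull e) :
    ∃ (f : X →L[ℝ] ℝ) (c : ℝ) (θ : ℕ → ℕ), c ≠ 0 ∧ StrictMono θ ∧
      Tendsto (fun m => f (e (θ m))) atTop (𝓝 c) := by
  obtain ⟨f, hf⟩ := not_forall.1 hnwn
  obtain ⟨ε, hε, hfreq⟩ : ∃ ε > 0, ∃ᶠ n in atTop, ε ≤ |f (e n)| := by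
    simpa [Metric.tendsto_atTop, Real.dist_eq, frequently_atTop] using hf
  obtain ⟨φ, hφ, hφε⟩ := extraction_of_frequently_atTop hfreq
  have hbdd : ∀ m, f (e (φ m)) ∈ Metric.closedBall (0 : ℝ) (‖f‖ * M) := fun m => by
    simpa using f.le_of_opNorm_le_of_le le_rfl (hM (φ m))
  obtain ⟨c, -, ψ, hψ, hlim⟩ := tendsto_subseq_of_bounded Metric.isBounded_closedBall hbdd
  have hc : ε ≤ |c| :=
    ge_of_tendsto ((continuous_abs.tendsto c).comp hlim) (Eventually.of_forall fun m => hφε _)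
  exact ⟨f, c, φ ∘ ψ, by rw [← abs_pos]; linarith, hφ.comp hψ, hlim⟩

theorem IsOneSpreading.exists_abs_sum_le {e : ℕ → X} (hs : IsOneSpreading e) {M : ℝ}
    (hM : ∀ i, ‖e i‖ ≤ M) (hnwn : ¬ WeaklyNull e) :
    ∃ K : ℝ, 0 ≤ K ∧ ∀ (k : ℕ) (a : ℕ → ℝ),
      |∑ i ∈ range k, a i| ≤ K * ‖∑ i ∈ range k, a i • e i‖ := by
  obtain ⟨f, c, θ, hc, hθ, hlim⟩ := exists_tendsto_ne_zero_of_not_weaklyNull hM hnwn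
  refine ⟨‖f‖ / |c|, by positivity, fun k a => ?_⟩
  have hshift : Tendsto (fun m => f (∑ i ∈ range k, a i • e (θ (m + i)))) atTop
      (𝓝 (∑ i ∈ range k, a i * c)) := by
    simp only [map_sum, map_smul, smul_eq_mul]
    exact tendsto_finsetSum _ fun i _ =>
      (hlim.comp (tendsto_add_atTop_nat i)).const_mul (a i)
  have hbound : ∀ m, |f (∑ i ∈ range k, a i • e (θ (m + i)))| ≤
      ‖f‖ * ‖∑ i ∈ range k, a i • e i‖ := fun m => by
    rw [← hs k a (fun i => θ (m + i)) fun i j hij => hθ (by omega), ← Real.norm_eq_abs]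
    exact f.le_opNorm _
  rw [div_mul_eq_mul_div, le_div_iff₀ (abs_pos.2 hc), ← abs_mul, sum_mul]
  exact le_of_tendsto' ((continuous_abs.tendsto _).comp hshift) hbound

theorem IsOneSpreading.abs_sum_sub_le {e : ℕ → X} (hs : IsOneSpreading e) {K : ℝ}
    (hsum : ∀ (k : ℕ) (a : ℕ → ℝ), |∑ i ∈ range k, a i| ≤ K * ‖∑ i ∈ range k, a i • e i‖)
    (a : ℕ → ℝ) {m n : ℕ} (hmn : m ≤ n) :
    |∑ i ∈ range n, a i - ∑ i ∈ range m, a i| ≤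
      K * ‖∑ i ∈ range n, a i • e i - ∑ i ∈ range m, a i • e i‖ := by
  rw [← sum_Ico_eq_sub _ hmn, ← sum_Ico_eq_sub _ hmn, sum_Ico_eq_sum_range, sum_Ico_eq_sum_range,
    hs _ (fun i => a (m + i)) (m + ·) fun i j hij => Nat.add_lt_add_left hij m]
  exact hsum _ _

theorem sum_smul_eq_sum_sub_smul {e d : ℕ → X} (hd0 : d 0 = e 0)
    (hd : ∀ i, d (i + 1) = e (i + 1) - e i) (b : ℕ → ℝ) (n : ℕ) :
    ∑ i ∈ range (n + 1), b i • d i =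
      ∑ i ∈ range (n + 1), (b i - b (i + 1)) • e i + b (n + 1) • e n := by
  induction n with
  | zero => simp [hd0, sub_smul]
  | succ n ih =>
    rw [sum_range_succ (fun i => b i • d i) (n + 1), ih, hd,
      sum_range_succ (fun i => (b i - b (i + 1)) • e i) (n + 1), smul_sub, sub_smul]
    abel

theorem IsBimonotone.abs_coeff_le {e : ℕ → X} (hbi : IsBimonotone e) (hnorm : ∀ i, ‖e i‖ = 1)
    {N m : ℕ} (hm : m < N) (a : ℕ → ℝ) : |a m| ≤ ‖∑ i ∈ range N, a i • e i‖ := by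
  have h := hbi N m m a
  rwa [show (range N).filter (fun i => m ≤ i ∧ i ≤ m) = {m} by ext i; simp; omega,
    sum_singleton, norm_smul, hnorm, mul_one, Real.norm_eq_abs] at h

theorem eq_zero_of_tendsto_sum_smul_diff {e d : ℕ → X} (hnorm : ∀ i, ‖e i‖ = 1)
    (hbi : IsBimonotone e) (hd0 : d 0 = e 0) (hd : ∀ i, d (i + 1) = e (i + 1) - e i)
    {c : ℕ → ℝ} (hc : Tendsto (fun n => ∑ i ∈ range n, c i • d i) atTop (𝓝 0)) : c = 0 := by
  set T := fun n => ‖∑ i ∈ range (n + 1), c i • d i‖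
  have hT : Tendsto T atTop (𝓝 0) := by
    simpa using ((tendsto_add_atTop_iff_nat 1).2 hc).norm
  -- truncating `c` after `n` makes the boundary term of the summation by parts vanish
  have hcoef : ∀ n m, m ≤ n → |c m - if m < n then c (m + 1) else 0| ≤ T n := by
    intro n m hm
    set b := fun i => if i ≤ n then c i else 0
    have hTb : ∑ i ∈ range (n + 1), c i • d i =
        ∑ i ∈ range (n + 1), (b i - b (i + 1)) • e i := by
      rw [sum_congr rfl fun i hi => by
          rw [show c i = b i by simp [b, Nat.lt_succ_iff.1 (mem_range.1 hi)]],
        sum_smul_eq_sum_sub_smul hd0 hd, show b (n + 1) = 0 by simp [b], zero_smul, add_zero]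
    have h := hbi.abs_coeff_le hnorm (Nat.lt_succ_of_le hm) fun i => b i - b (i + 1)
    rw [← hTb] at h
    have hbm : b m = c m := if_pos hm
    have hbm1 : b (m + 1) = if m < n then c (m + 1) else 0 :=
      if_congr Nat.add_one_le_iff rfl rfl
    rwa [hbm, hbm1] at h
  have hstep : ∀ m, c (m + 1) = c m := by
    intro m
    have h : |c m - c (m + 1)| ≤ 0 := ge_of_tendsto hT <|
      eventually_gt_atTop m |>.mono fun n hn => by simpa [hn] using hcoef n m hn.le
    exact (sub_eq_zero.1 (abs_nonpos_iff.1 h)).symm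
  have hconst : ∀ m, c m = c 0 := fun m => by
    induction m with
    | zero => rfl
    | succ m ih => rw [hstep, ih]
  have h0 : |c 0| ≤ 0 := ge_of_tendsto hT <| Eventually.of_forall fun n => by
    simpa [hconst n] using hcoef n n le_rfl
  funext m
  rw [hconst m]
  exact abs_nonpos_iff.1 h0

theorem exists_tendsto_sum_smul_diff {e d : ℕ → X} (hs : IsOneSpreading e)
    (hnorm : ∀ i, ‖e i‖ = 1) {K : ℝ} (hK : 0 ≤ K)
    (hsum : ∀ (k : ℕ) (a : ℕ → ℝ), |∑ i ∈ range k, a i| ≤ K * ‖∑ i ∈ range k, a i • e i‖)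
    (hd0 : d 0 = e 0) (hd : ∀ i, d (i + 1) = e (i + 1) - e i) {x : X} {a : ℕ → ℝ}
    (ha : Tendsto (fun n => ∑ i ∈ range n, a i • e i) atTop (𝓝 x)) :
    ∃ b : ℕ → ℝ, Tendsto (fun n => ∑ i ∈ range n, b i • d i) atTop (𝓝 x) := by
  set A := fun n => ∑ i ∈ range n, a i
  have hA : CauchySeq A := by
    obtain ⟨β, hβ0, hβ, hβlim⟩ := cauchySeq_iff_le_tendsto_0.1 ha.cauchySeq
    refine cauchySeq_iff_le_tendsto_0.2 ⟨fun N => K * β N, fun N => mul_nonneg hK (hβ0 N),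
      fun n m N hn hm => ?_, by simpa using hβlim.const_mul K⟩
    rcases le_total m n with h | h
    · rw [Real.dist_eq]
      exact (hs.abs_sum_sub_le hsum a h).trans
        (mul_le_mul_of_nonneg_left (by simpa [dist_eq_norm] using hβ n m N hn hm) hK)
    · rw [dist_comm, Real.dist_eq]
      exact (hs.abs_sum_sub_le hsum a h).trans
        (mul_le_mul_of_nonneg_left (by simpa [dist_eq_norm] using hβ m n N hm hn) hK)
  obtain ⟨σ, hσ⟩ := cauchySeq_tendsto_of_complete hA
  refine ⟨fun i => σ - A i, (tendsto_add_atTop_iff_nat 1).1 ?_⟩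
  have hpartial : ∀ n, ∑ i ∈ range (n + 1), (σ - A i) • d i =
      ∑ i ∈ range (n + 1), a i • e i + (σ - A (n + 1)) • e n := fun n => by
    simp [sum_smul_eq_sum_sub_smul hd0 hd, A, sum_range_succ]
  have htail : Tendsto (fun n => (σ - A (n + 1)) • e n) atTop (𝓝 0) := by
    rw [tendsto_zero_iff_norm_tendsto_zero]
    simpa [norm_smul, hnorm] using
      (((tendsto_add_atTop_iff_nat 1).2 hσ).const_sub σ).norm
  simpa [hpartial] using ((tendsto_add_atTop_iff_nat 1).2 ha).add htail

theorem isSchauderBasis_of_diff {e d : ℕ → X} (hbasis : IsSchauderBasis e)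
    (hs : IsOneSpreading e) (hnorm : ∀ i, ‖e i‖ = 1) (hbi : IsBimonotone e)
    (hnwn : ¬ WeaklyNull e) (hd0 : d 0 = e 0) (hd : ∀ i, d (i + 1) = e (i + 1) - e i) :
    IsSchauderBasis d := fun x => by
  obtain ⟨K, hK, hsum⟩ := hs.exists_abs_sum_le (fun i => (hnorm i).le) hnwn
  obtain ⟨a, ha, -⟩ := hbasis x
  obtain ⟨b, hb⟩ := exists_tendsto_sum_smul_diff hs hnorm hK hsum hd0 hd ha
  refine ⟨b, hb, fun b' hb' => sub_eq_zero.1 ?_⟩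
  exact eq_zero_of_tendsto_sum_smul_diff hnorm hbi hd0 hd (c := b' - b) <| by
    simpa [sub_smul, sum_sub_distrib] using hb'.sub hb

theorem IsOneSpreading.norm_sum_abs_smul_sub_le {e : ℕ → X} (hs : IsOneSpreading e) {K : ℕ}
    {k : ℕ → ℕ} (hk : StrictMonoOn k (Set.Iio K)) (t : ℕ → ℝ) :
    ‖∑ i ∈ range K, |t i| • (e (2 * k i + 1) - e (2 * k i))‖ ≤
      2 * ‖∑ i ∈ range K, t i • e i‖ := by
  have hmono : ∀ s : ℕ → ℕ, (∀ i, s i ≤ 1) → StrictMonoOn (fun i => 2 * k i + s i) (Set.Iio K) :=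
    fun s hs' i hi j hj hij => by have := hk hi hj hij; have := hs' i; dsimp only; omega
  set pos := fun i => if 0 ≤ t i then 1 else 0
  set neg := fun i => if 0 ≤ t i then 0 else 1
  have hsplit : ∀ i, |t i| • (e (2 * k i + 1) - e (2 * k i)) =
      t i • e (2 * k i + pos i) - t i • e (2 * k i + neg i) := fun i => by
    by_cases ht : 0 ≤ t i
    · simp [pos, neg, ht, abs_of_nonneg ht, smul_sub]
    · simp [pos, neg, ht, abs_of_neg (not_le.1 ht), smul_sub]
      abel
  rw [sum_congr rfl fun i _ => hsplit i, sum_sub_distrib, two_mul]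
  refine (norm_sub_le _ _).trans (le_of_eq ?_)
  rw [hs.norm_sum_comp_of_strictMonoOn (hmono pos fun i => by simp only [pos]; split_ifs <;> simp),
    hs.norm_sum_comp_of_strictMonoOn (hmono neg fun i => by simp only [neg]; split_ifs <;> simp)]

theorem IsOneSpreading.sum_abs_le_of_mul_le_norm_pairedDiffSum {e : ℕ → X}
    (hs : IsOneSpreading e) (hnorm : ∀ i, ‖e i‖ = 1) {η : ℝ} (hη : 0 < η)
    (hl1 : ∀ n : ℕ, η * n ≤ ‖pairedDiffSum e n‖) (K : ℕ) (t : ℕ → ℝ) :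
    ∑ i ∈ range K, |t i| ≤ 4 / η * ‖∑ i ∈ range K, t i • e i‖ := by
  obtain ⟨n, hn⟩ := exists_nat_ge (4 * K / η)
  obtain ⟨F, hF1, hFu⟩ := exists_dual_vector'' ℝ (pairedDiffSum e n)
  replace hFu : F (pairedDiffSum e n) = ‖pairedDiffSum e n‖ := by simpa using hFu
  have hFle : ∀ y, F y ≤ ‖y‖ := fun y =>
    (le_abs_self _).trans (by simpa using F.le_of_opNorm_le hF1 y)
  have hcount := sum_le_mul_card_filter_add (range n) (M := 2) (c := η / 2)
    (f := fun l => F (e (2 * l + 1) - e (2 * l)))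
    (fun l _ => (hFle _).trans ((norm_sub_le _ _).trans (by simp [hnorm]; norm_num)))
    (by positivity)
  rw [← map_sum, ← pairedDiffSum, hFu, card_range] at hcount
  set S := (range n).filter fun l => η / 2 ≤ F (e (2 * l + 1) - e (2 * l))
  -- `F ≤ 2` on each pair and `F (pairedDiffSum e n) ≥ η n`, so `#S ≥ η n / 4 ≥ K`
  have hKS : K ≤ #S := by
    have h1 := hl1 n
    rw [div_le_iff₀ hη] at hn
    exact_mod_cast (show (K : ℝ) ≤ #S by nlinarith)
  have hfin := S.finite_toSet
  set k := Nat.nth (· ∈ S)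
  have hk : StrictMonoOn k (Set.Iio K) :=
    (Nat.nth_strictMonoOn hfin).mono (Set.Iio_subset_Iio (by simpa using hKS))
  have hkS : ∀ i ∈ range K, k i ∈ S := fun i hi =>
    Nat.nth_mem_of_lt_card hfin (by simpa using (mem_range.1 hi).trans_le hKS)
  have hkey : η / 2 * ∑ i ∈ range K, |t i| ≤ 2 * ‖∑ i ∈ range K, t i • e i‖ := calc
    η / 2 * ∑ i ∈ range K, |t i|
        ≤ ∑ i ∈ range K, |t i| * F (e (2 * k i + 1) - e (2 * k i)) := by
      rw [mul_sum]
      exact sum_le_sum fun i hi => by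
        rw [mul_comm]; exact mul_le_mul_of_nonneg_left (mem_filter.1 (hkS i hi)).2 (abs_nonneg _)
    _ = F (∑ i ∈ range K, |t i| • (e (2 * k i + 1) - e (2 * k i))) := by
      simp [map_sum]
    _ ≤ 2 * ‖∑ i ∈ range K, t i • e i‖ := (hFle _).trans (hs.norm_sum_abs_smul_sub_le hk t)
  rw [div_mul_eq_mul_div, le_div_iff₀ hη]
  linarith

theorem IsOneSpreading.norm_sum_translates_le {e : ℕ → X} (hs : IsOneSpreading e) {φ : ℕ → ℝ}
    {m : ℕ} (hφ : ∑ u ∈ range m, φ u = 0) (P n : ℕ) :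
    ‖∑ l ∈ range n, ∑ u ∈ range m, φ u • e (P + u + l * m)‖ ≤
      (∑ u ∈ range m, |∑ t ∈ range (u + 1), φ t|) * ‖pairedDiffSum e n‖ := by
  rw [sum_comm]
  simp_rw [← smul_sum]
  refine norm_sum_smul_le_of_sum_eq_zero hφ (norm_nonneg _) fun u hu => le_of_eq ?_
  rw [← norm_neg, neg_sub, ← sum_sub_distrib,
    ← hs.norm_sum_succ_sub_eq (s := fun l => P + u + l * m) fun l => by rw [add_one_mul]; omega]
  simp only [← add_assoc, add_right_comm _ 1]

theorem strictMono_ite_add {P Q s t : ℕ} (hst : s ≤ t) :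
    StrictMono fun i => if i < P then i else if i < Q then i + s else i + t :=
  strictMono_nat_of_lt_succ fun i => by split_ifs <;> omega

/-- The `n` vectors obtained by translating the zero-sum block `γ` by `l * (Q - P)`, `l < n`, and
the tail of `β` past all of them, have norm `‖β + γ‖`; their average is `β` up to an error of
order `‖pairedDiffSum e n‖ / n`. -/
theorem IsOneSpreading.mul_norm_le_mul_norm_add {e : ℕ → X} (hs : IsOneSpreading e)
    {N P Q : ℕ} (hQN : Q ≤ N) {β γ : ℕ → ℝ} (hβ : ∀ i ∈ Ico P Q, β i = 0)
    (hγ : ∀ i ∉ Ico P Q, γ i = 0) (hγsum : ∑ i ∈ Ico P Q, γ i = 0) (n : ℕ) :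
    n * ‖∑ i ∈ range N, β i • e i‖ ≤ n * ‖∑ i ∈ range N, (β i + γ i) • e i‖ +
      (∑ u ∈ range (Q - P), |∑ t ∈ range (u + 1), γ (P + t)|) * ‖pairedDiffSum e n‖ := by
  set m := Q - P
  set σ : ℕ → ℕ → ℕ := fun l i => if i < P then i else if i < Q then i + l * m else i + n * m
  have hσ : ∀ l ≤ n, StrictMono (σ l) := fun l hl =>
    strictMono_ite_add (Nat.mul_le_mul_right m hl)
  have hσ_outside : ∀ l, ∀ i ∉ Ico P Q, σ l i = σ n i := fun l i hi => by
    simp only [mem_Ico, not_and_or, not_le, not_lt] at hi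
    simp only [σ]
    split_ifs <;> omega
  have hcopy : ∀ l, ∑ i ∈ range N, (β i + γ i) • e (σ l i) =
      ∑ i ∈ range N, β i • e (σ n i) + ∑ u ∈ range m, γ (P + u) • e (P + u + l * m) := by
    intro l
    simp only [add_smul, sum_add_distrib]
    congr 1
    · refine sum_congr rfl fun i _ => ?_
      by_cases hi : i ∈ Ico P Q
      · simp [hβ i hi]
      · rw [hσ_outside l i hi]
    · rw [← sum_subset (fun i hi => mem_range.2 ((mem_Ico.1 hi).2.trans_le hQN))
        fun i _ hi => by rw [hγ i hi, zero_smul], sum_Ico_eq_sum_range]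
      refine sum_congr rfl fun u hu => ?_
      have : σ l (P + u) = P + u + l * m := by simp only [σ]; split_ifs <;> simp at hu <;> omega
      rw [this]
  set Z := ∑ l ∈ range n, ∑ u ∈ range m, γ (P + u) • e (P + u + l * m)
  have hZ : ‖Z‖ ≤ (∑ u ∈ range m, |∑ t ∈ range (u + 1), γ (P + t)|) * ‖pairedDiffSum e n‖ :=
    hs.norm_sum_translates_le (by rwa [← sum_Ico_eq_sum_range]) P n
  have havg : (n : ℝ) • ∑ i ∈ range N, β i • e (σ n i) =
      ∑ l ∈ range n, ∑ i ∈ range N, (β i + γ i) • e (σ l i) - Z := by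
    simp only [hcopy, sum_add_distrib, sum_const, card_range, Z, Nat.cast_smul_eq_nsmul]
    abel
  calc (n : ℝ) * ‖∑ i ∈ range N, β i • e i‖
      = ‖(n : ℝ) • ∑ i ∈ range N, β i • e (σ n i)‖ := by
        rw [norm_smul, hs N β _ (hσ n le_rfl), Real.norm_natCast]
    _ ≤ ∑ l ∈ range n, ‖∑ i ∈ range N, (β i + γ i) • e (σ l i)‖ + ‖Z‖ := by
        rw [havg]; exact (norm_sub_le _ _).trans (add_le_add_left (norm_sum_le _ _) _)
    _ = n * ‖∑ i ∈ range N, (β i + γ i) • e i‖ + ‖Z‖ := by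
        rw [sum_congr rfl fun l hl => hs N _ _ (hσ l (mem_range.1 hl).le), sum_const,
          card_range, nsmul_eq_mul]
    _ ≤ _ := by gcongr

theorem IsOneSpreading.norm_le_norm_add_of_sum_eq_zero {e : ℕ → X} (hs : IsOneSpreading e)
    (hsmall : ∀ η > 0, ∃ n : ℕ, ‖pairedDiffSum e n‖ < η * n)
    {N P Q : ℕ} (hQN : Q ≤ N) {β γ : ℕ → ℝ} (hβ : ∀ i ∈ Ico P Q, β i = 0)
    (hγ : ∀ i ∉ Ico P Q, γ i = 0) (hγsum : ∑ i ∈ Ico P Q, γ i = 0) :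
    ‖∑ i ∈ range N, β i • e i‖ ≤ ‖∑ i ∈ range N, (β i + γ i) • e i‖ := by
  set C := ∑ u ∈ range (Q - P), |∑ t ∈ range (u + 1), γ (P + t)|
  have hC : 0 ≤ C := by positivity
  refine le_of_forall_pos_lt_add fun ε hε => ?_
  obtain ⟨n, hn⟩ := hsmall (ε / (C + 1)) (by positivity)
  have hn0 : (0 : ℝ) < n := pos_of_mul_pos_right ((norm_nonneg _).trans_lt hn) (by positivity)
  have hCε : C * (ε / (C + 1)) < ε := by
    rw [mul_div_assoc', div_lt_iff₀ (by positivity)]; nlinarith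
  have := hs.mul_norm_le_mul_norm_add hQN hβ hγ hγsum n
  refine lt_of_mul_lt_mul_left ?_ hn0.le
  nlinarith [mul_le_mul_of_nonneg_left hn.le hC]

theorem isUnconditionalSeq_of_norm_sum_ite_le {x : ℕ → X} {K : ℝ} (hK : 0 ≤ K)
    (h : ∀ k (c : ℕ → ℝ) (T : Finset ℕ),
      ‖∑ i ∈ range k, (if i ∈ T then 0 else c i) • x i‖ ≤ K * ‖∑ i ∈ range k, c i • x i‖) :
    IsUnconditionalSeq x := by
  refine ⟨2 * K + 1, by positivity, fun k a ε hε => ?_⟩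
  set T := (range k).filter (ε · ≠ 1)
  have hflip : ∑ i ∈ range k, (ε i * a i) • x i =
      (2 : ℝ) • ∑ i ∈ range k, (if i ∈ T then 0 else a i) • x i - ∑ i ∈ range k, a i • x i := by
    rw [smul_sum, ← sum_sub_distrib]
    refine sum_congr rfl fun i hi => ?_
    rcases hε i with hi1 | hi1
    · simp [T, hi1]; module
    · norm_num [T, hi, hi1]
  rw [hflip]
  calc _ ≤ ‖(2 : ℝ) • ∑ i ∈ range k, (if i ∈ T then 0 else a i) • x i‖ +
        ‖∑ i ∈ range k, a i • x i‖ := norm_sub_le _ _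
    _ ≤ 2 * (K * ‖∑ i ∈ range k, a i • x i‖) + ‖∑ i ∈ range k, a i • x i‖ := by
        rw [norm_smul, Real.norm_two]; gcongr; exact h k a T
    _ = _ := by ring

structure IsBlockSequence (e x : ℕ → X) (B : ℕ → ℕ) (γ : ℕ → ℕ → ℝ) : Prop where
  monotone : Monotone B
  coeff_eq_zero : ∀ j, ∀ i ∉ Ico (B j) (B (j + 1)), γ j i = 0
  eq_sum : ∀ j, x j = ∑ i ∈ range (B (j + 1)), γ j i • e i

namespace IsBlockSequence

variable {e x : ℕ → X} {B : ℕ → ℕ} {γ : ℕ → ℕ → ℝ}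

theorem coeff_eq_zero_of_mem (hb : IsBlockSequence e x B γ) {i j j' : ℕ} (hjj : j ≠ j')
    (hi : i ∈ Ico (B j) (B (j + 1))) : γ j' i = 0 := by
  refine hb.coeff_eq_zero j' i fun hi' => ?_
  rw [mem_Ico] at hi hi'
  rcases lt_or_gt_of_ne hjj with h | h
  · have := hb.monotone (show j + 1 ≤ j' by omega); omega
  · have := hb.monotone (show j' + 1 ≤ j by omega); omega

theorem eq_sum_of_le (hb : IsBlockSequence e x B γ) {j N : ℕ} (hN : B (j + 1) ≤ N) :
    x j = ∑ i ∈ range N, γ j i • e i := by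
  rw [hb.eq_sum, sum_subset (range_subset_range.2 hN)]
  intro i _ hi
  rw [hb.coeff_eq_zero j i fun h => hi (mem_range.2 (mem_Ico.1 h).2), zero_smul]

theorem sum_smul_eq (hb : IsBlockSequence e x B γ) (k : ℕ) (c : ℕ → ℝ) :
    ∑ j ∈ range k, c j • x j = ∑ i ∈ range (B k), (∑ j ∈ range k, c j * γ j i) • e i := by
  simp_rw [sum_smul, mul_smul]
  rw [sum_comm]
  refine sum_congr rfl fun j hj => ?_
  rw [hb.eq_sum_of_le (hb.monotone (mem_range.1 hj)), smul_sum]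

theorem abs_sum_ite_mul_le (hb : IsBlockSequence e x B γ) (k : ℕ) (c : ℕ → ℝ) (T : Finset ℕ)
    (i : ℕ) :
    |∑ j ∈ range k, (if j ∈ T then 0 else c j) * γ j i| ≤ |∑ j ∈ range k, c j * γ j i| := by
  by_cases h : ∃ j ∈ range k, γ j i ≠ 0
  · obtain ⟨j, hj, hγ⟩ := h
    have hothers : ∀ j' ≠ j, γ j' i = 0 := fun j' hj' =>
      hb.coeff_eq_zero_of_mem hj'.symm (by_contra fun hi => hγ (hb.coeff_eq_zero j i hi))
    rw [sum_eq_single_of_mem j hj fun j' _ hj' => by rw [hothers j' hj', mul_zero],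
      sum_eq_single_of_mem j hj fun j' _ hj' => by rw [hothers j' hj', mul_zero]]
    split_ifs
    · rw [zero_mul, abs_zero]; exact abs_nonneg _
    · exact le_rfl
  · push Not at h
    rw [sum_eq_zero fun j hj => by rw [h j hj, mul_zero],
      sum_eq_zero fun j hj => by rw [h j hj, mul_zero]]

theorem norm_sum_ite_le_of_sum_abs_le (hb : IsBlockSequence e x B γ) (hnorm : ∀ i, ‖e i‖ = 1)
    {C : ℝ} (hl1 : ∀ (K : ℕ) (t : ℕ → ℝ), ∑ i ∈ range K, |t i| ≤ C * ‖∑ i ∈ range K, t i • e i‖)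
    (k : ℕ) (c : ℕ → ℝ) (T : Finset ℕ) :
    ‖∑ j ∈ range k, (if j ∈ T then 0 else c j) • x j‖ ≤ C * ‖∑ j ∈ range k, c j • x j‖ := by
  rw [hb.sum_smul_eq, hb.sum_smul_eq]
  refine (norm_sum_le _ _).trans ((sum_le_sum fun i _ => ?_).trans
    (hl1 (B k) fun i => ∑ j ∈ range k, c j * γ j i))
  rw [norm_smul, hnorm, mul_one, Real.norm_eq_abs]
  exact hb.abs_sum_ite_mul_le k c T i

theorem norm_sum_update_zero_le (hb : IsBlockSequence e x B γ) (hbi : IsBimonotone e)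
    (k : ℕ) (c : ℕ → ℝ) :
    ‖∑ j ∈ range k, update c 0 0 j • x j‖ ≤ ‖∑ j ∈ range k, c j • x j‖ := by
  rw [hb.sum_smul_eq, hb.sum_smul_eq]
  -- deleting the first block is the interval projection onto `[B 1, B k]`
  refine le_of_eq_of_le ?_ (hbi (B k) (B 1) (B k) fun i => ∑ j ∈ range k, c j * γ j i)
  rw [sum_filter]
  congr 1
  refine sum_congr rfl fun i hi => ?_
  split_ifs with h
  · refine congrArg (· • e i) (sum_congr rfl fun j _ => ?_)
    rcases eq_or_ne j 0 with rfl | hj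
    · rw [update_self, zero_mul, hb.coeff_eq_zero 0 i fun hi' => by
        simp only [mem_Ico, zero_add] at hi'; omega, mul_zero]
    · rw [update_of_ne hj]
  · have hi1 : i < B 1 := by rw [mem_range] at hi; omega
    refine (congrArg (· • e i) (sum_eq_zero fun j _ => ?_)).trans (zero_smul _ _)
    rcases eq_or_ne j 0 with rfl | hj
    · rw [update_self, zero_mul]
    · have := hb.monotone (Nat.one_le_iff_ne_zero.2 hj)
      rw [hb.coeff_eq_zero j i fun hi' => by simp only [mem_Ico] at hi'; omega, mul_zero]

theorem norm_sum_update_le_of_sum_eq_zero (hb : IsBlockSequence e x B γ)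
    (hs : IsOneSpreading e) (hsmall : ∀ η > 0, ∃ n : ℕ, ‖pairedDiffSum e n‖ < η * n) {j₀ : ℕ}
    (hzero : ∑ i ∈ range (B (j₀ + 1)), γ j₀ i = 0) (k : ℕ) (c : ℕ → ℝ) :
    ‖∑ j ∈ range k, update c j₀ 0 j • x j‖ ≤ ‖∑ j ∈ range k, c j • x j‖ := by
  by_cases hk : j₀ < k
  swap
  · rw [sum_congr rfl fun j hj => by rw [update_of_ne (by rw [mem_range] at hj; omega)]]
  have hsplit : ∀ i, ∑ j ∈ range k, c j * γ j i =
      ∑ j ∈ range k, update c j₀ 0 j * γ j i + c j₀ * γ j₀ i := fun i => by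
    rw [← add_sum_erase _ _ (mem_range.2 hk), ← add_sum_erase _ _ (mem_range.2 hk), update_self,
      zero_mul, zero_add, add_comm]
    exact congrArg (· + _) (sum_congr rfl fun j hj => by rw [update_of_ne (ne_of_mem_erase hj)])
  rw [hb.sum_smul_eq, hb.sum_smul_eq]
  simp_rw [hsplit]
  refine hs.norm_le_norm_add_of_sum_eq_zero hsmall (hb.monotone (show j₀ + 1 ≤ k from hk))
    (fun i hi => sum_eq_zero fun j _ => ?_)
    (fun i hi => by rw [hb.coeff_eq_zero j₀ i hi, mul_zero]) ?_
  · rcases eq_or_ne j j₀ with rfl | hj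
    · rw [update_self, zero_mul]
    · rw [hb.coeff_eq_zero_of_mem hj.symm hi, mul_zero]
  · rw [← sum_range_add_sum_Ico _ (hb.monotone (j₀.le_add_right 1)), sum_eq_zero fun i hi =>
      hb.coeff_eq_zero j₀ i fun hi' => by simp only [mem_Ico, mem_range] at hi hi'; omega,
      zero_add] at hzero
    rw [← mul_sum, hzero, mul_zero]

theorem norm_sum_update_le (hb : IsBlockSequence e x B γ) (hs : IsOneSpreading e)
    (hbi : IsBimonotone e) (hsmall : ∀ η > 0, ∃ n : ℕ, ‖pairedDiffSum e n‖ < η * n)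
    (hzero : ∀ j, 0 < j → ∑ i ∈ range (B (j + 1)), γ j i = 0) (k : ℕ) (c : ℕ → ℝ) (j₀ : ℕ) :
    ‖∑ j ∈ range k, update c j₀ 0 j • x j‖ ≤ ‖∑ j ∈ range k, c j • x j‖ := by
  rcases Nat.eq_zero_or_pos j₀ with rfl | hj₀
  · exact hb.norm_sum_update_zero_le hbi k c
  · exact hb.norm_sum_update_le_of_sum_eq_zero hs hsmall (hzero j₀ hj₀) k c

end IsBlockSequence

theorem IsSkippedBlockBasis.exists_isBlockSequence {e d x : ℕ → X} (hd0 : d 0 = e 0)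
    (hd : ∀ i, d (i + 1) = e (i + 1) - e i) (hx : IsSkippedBlockBasis d x) :
    ∃ B γ, IsBlockSequence e x B γ ∧ ∀ j, 0 < j → ∑ i ∈ range (B (j + 1)), γ j i = 0 := by
  obtain ⟨a, p, q, hxa, -, hpq, hqp⟩ := hx
  set a' : ℕ → ℕ → ℝ := fun j i => if i ∈ Icc (p j) (q j) then a j i else 0
  have ha' : ∀ j i, i < p j ∨ q j < i → a' j i = 0 := fun j i hi => by
    simp only [a', mem_Icc]; rw [if_neg (by omega)]
  -- in `e`-coordinates block `j` lives in `[p j - 1, q j] ⊆ [q (j - 1) + 1, q j]`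
  refine ⟨fun | 0 => 0 | j + 1 => q j + 1, fun j i => a' j i - a' j (i + 1), ⟨?_, ?_, ?_⟩, ?_⟩
  · refine monotone_nat_of_le_succ fun j => ?_
    cases j with
    | zero => exact Nat.zero_le _
    | succ j => have := hqp j; have := hpq (j + 1); dsimp only; omega
  · intro j i hi
    cases j with
    | zero =>
      simp only [mem_Ico] at hi
      rw [ha' 0 i (by omega), ha' 0 (i + 1) (by omega), sub_zero]
    | succ j =>
      have := hqp j
      simp only [mem_Ico] at hi
      rw [ha' _ i (by omega), ha' _ (i + 1) (by omega), sub_zero]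
  · intro j
    have hIcc : ∑ i ∈ Icc (p j) (q j), a j i • d i = ∑ i ∈ range (q j + 1), a' j i • d i := by
      simp only [a', ite_smul, zero_smul]
      rw [sum_ite_mem, inter_eq_right.2 fun i hi => by simp only [mem_Icc] at hi; simp; omega]
    rw [hxa, hIcc, sum_smul_eq_sum_sub_smul hd0 hd, ha' j _ (Or.inr (lt_add_one _)), zero_smul,
      add_zero]
  · intro j hj
    obtain ⟨j, rfl⟩ := Nat.exists_eq_add_of_lt hj
    have := hqp j
    simp only [zero_add]
    rw [sum_range_sub', ha' _ 0 (by omega), ha' _ _ (Or.inr (lt_add_one _)), sub_zero]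

end

theorem difference_basis_skipped_unconditional_general
    {X : Type} [NormedAddCommGroup X] [NormedSpace ℝ X]
    (e : ℕ → X) (hnorm : ∀ i, ‖e i‖ = 1) (hbasis : IsSchauderBasis e)
    (hspread : IsOneSpreading e) (hbi : IsBimonotone e) (hnwn : ¬ WeaklyNull e)
    (d : ℕ → X) (hd0 : d 0 = e 0) (hd : ∀ i, d (i + 1) = e (i + 1) - e i) :
    IsSchauderBasis d ∧
      ∀ x : ℕ → X, IsSkippedBlockBasis d x → IsUnconditionalSeq x := by
  refine ⟨isSchauderBasis_of_diff hbasis hspread hnorm hbi hnwn hd0 hd, fun x hx => ?_⟩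
  obtain ⟨B, γ, hb, hzero⟩ := hx.exists_isBlockSequence hd0 hd
  by_cases hl1 : ∃ η > 0, ∀ n : ℕ, η * n ≤ ‖pairedDiffSum e n‖
  · obtain ⟨η, hη, hl1⟩ := hl1
    exact isUnconditionalSeq_of_norm_sum_ite_le (by positivity) <|
      hb.norm_sum_ite_le_of_sum_abs_le hnorm
        (hspread.sum_abs_le_of_mul_le_norm_pairedDiffSum hnorm hη hl1)
  · push Not at hl1
    refine isUnconditionalSeq_of_norm_sum_ite_le zero_le_one fun k c T => ?_
    rw [one_mul]
    exact norm_sum_ite_le_of_norm_sum_update_le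
      (hb.norm_sum_update_le hspread hbi hl1 hzero) k c T

theorem difference_basis_skipped_unconditional
    {X : Type} [NormedAddCommGroup X] [NormedSpace ℝ X] [CompleteSpace X]
    (e : ℕ → X) (hnorm : ∀ i, ‖e i‖ = 1) (hbasis : IsSchauderBasis e)
    (hspread : IsOneSpreading e) (hbi : IsBimonotone e) (hnwn : ¬ WeaklyNull e)
    (d : ℕ → X) (hd0 : d 0 = e 0) (hd : ∀ i, d (i + 1) = e (i + 1) - e i) :
    IsSchauderBasis d ∧
      ∀ x : ℕ → X, IsSkippedBlockBasis d x → IsUnconditionalSeq x :=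
  difference_basis_skipped_unconditional_general e hnorm hbasis hspread hbi hnwn d hd0 hd
end

section
/- Suppose a Banach space X has a skipped unconditional Schauder basis, i.e. a Schauder basis (e_i) such that every skipped block basis of (e_i) is unconditional. Let Y be a closed subspace of X whose dual Y* is not separable. Then ℓ1 embeds into Y. -/
open Filter Finset Topology NormedSpace
open scoped NNReal

/-- `Z` embeds (isomorphically) into `W`. -/
def Embeds (Z W : Type) [NormedAddCommGroup Z] [NormedSpace ℝ Z]
    [NormedAddCommGroup W] [NormedSpace ℝ W] : Prop :=
  ∃ (T : Z →ₗ[ℝ] W) (c C : ℝ), 0 < c ∧ 0 < C ∧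
    ∀ z : Z, c * ‖z‖ ≤ ‖T z‖ ∧ ‖T z‖ ≤ C * ‖z‖

/-- The space `ℓ¹`. -/
noncomputable abbrev ellOne : Type := lp (fun _ : ℕ => ℝ) 1

/-!
Let `Vₘ = Y ∩ closure (span {eᵢ : i > m})`. Since every vector has a basis expansion, `Vₘ` has
finite codimension in `Y`, so its annihilator in `Y*` is finite-dimensional. As `Y*` is not
separable, some `f ∈ Y*` stays at distance `d > 0` from all these annihilators, and then every
`Vₘ` contains a vector `y` of the open unit ball with `f y > d / 2`. Approximating such vectors by
finitely supported ones with growing supports gives a skipped block basis `(xⱼ)` with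
`F xⱼ ≥ d / 4` for a Hahn–Banach extension `F` of `f`, each `xⱼ` close to a unit-ball vector
`yⱼ ∈ Y`. Unconditionality of `(xⱼ)` turns this into the lower `ℓ¹` estimate
`‖∑ aⱼ xⱼ‖ ≥ c ∑ |aⱼ|`; since the approximation errors tend to `0`, the estimate passes to a tail
of `(yⱼ)`, which therefore spans a copy of `ℓ¹` in `Y`.
-/

section BlockBases

variable {X : Type} [NormedAddCommGroup X] [NormedSpace ℝ X]

def tailSpan (e : ℕ → X) (m : ℕ) : Submodule ℝ X := Submodule.span ℝ (e '' Set.Ioi m)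

lemma exists_eq_sum_Icc_of_mem_tailSpan {e : ℕ → X} {m : ℕ} {v : X} (hv : v ∈ tailSpan e m) :
    ∃ (c : ℕ → ℝ) (q : ℕ), m < q ∧ v = ∑ i ∈ Icc (m + 1) q, c i • e i := by
  obtain ⟨l, hl, rfl⟩ := (Finsupp.mem_span_image_iff_linearCombination ℝ).mp hv
  refine ⟨l, max (m + 1) (l.support.sup id), by omega, ?_⟩
  rw [Finsupp.linearCombination_apply, Finsupp.sum]
  refine Finset.sum_subset (fun i hi => ?_) fun i _ hi => by
    rw [Finsupp.notMem_support_iff.mp hi, zero_smul]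
  have hmi : m < i := hl hi
  have hiq : i ≤ l.support.sup id := Finset.le_sup (f := id) hi
  exact mem_Icc.mpr ⟨hmi, le_max_of_le_right hiq⟩

lemma exists_sum_Icc_near_of_mem_closure_tailSpan {e : ℕ → X} {m : ℕ} {y : X}
    (hy : y ∈ (tailSpan e m).topologicalClosure) {η : ℝ} (hη : 0 < η) :
    ∃ (c : ℕ → ℝ) (q : ℕ), m < q ∧ ‖∑ i ∈ Icc (m + 1) q, c i • e i - y‖ < η := by
  rw [← SetLike.mem_coe, Submodule.topologicalClosure_coe] at hy
  obtain ⟨v, hv, hvy⟩ := Metric.mem_closure_iff.mp hy η hη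
  obtain ⟨c, q, hq, rfl⟩ := exists_eq_sum_Icc_of_mem_tailSpan hv
  exact ⟨c, q, hq, by rwa [← dist_eq_norm, dist_comm]⟩

lemma finiteDimensional_quotient_closure_tailSpan {e : ℕ → X}
    (he : ∀ x : X, ∃ a : ℕ → ℝ, Tendsto (fun n => ∑ i ∈ range n, a i • e i) atTop (𝓝 x))
    (m : ℕ) : FiniteDimensional ℝ (X ⧸ (tailSpan e m).topologicalClosure) := by
  set Cl := (tailSpan e m).topologicalClosure
  set head := Submodule.span ℝ (e '' Set.Iio (m + 1))
  have : FiniteDimensional ℝ head :=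
    FiniteDimensional.span_of_finite ℝ ((Set.finite_Iio _).image e)
  refine Module.Finite.of_surjective (Cl.mkQ ∘ₗ head.subtype) fun z => ?_
  obtain ⟨x, rfl⟩ := Cl.mkQ_surjective z
  obtain ⟨a, ha⟩ := he x
  set s := ∑ i ∈ range (m + 1), a i • e i
  have hs : s ∈ head := sum_mem fun i hi =>
    head.smul_mem _ (Submodule.subset_span ⟨i, Set.mem_Iio.mpr (mem_range.mp hi), rfl⟩)
  have hx : x - s ∈ Cl := by
    rw [← SetLike.mem_coe, Submodule.topologicalClosure_coe]
    refine mem_closure_of_tendsto (ha.sub_const s) ?_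
    filter_upwards [eventually_ge_atTop (m + 1)] with n hn
    rw [SetLike.mem_coe, sum_range_sub_sum_range hn]
    exact sum_mem fun i hi => (tailSpan e m).smul_mem _ (Submodule.subset_span
      ⟨i, Set.mem_Ioi.mpr (mem_filter.mp hi).2, rfl⟩)
  exact ⟨⟨s, hs⟩, (Submodule.Quotient.eq Cl).mpr (by rw [← neg_sub]; exact Cl.neg_mem hx)⟩

lemma finiteDimensional_quotient_comap_subtype (Y V : Submodule ℝ X)
    [FiniteDimensional ℝ (X ⧸ V)] : FiniteDimensional ℝ (Y ⧸ V.comap Y.subtype) := by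
  refine Module.Finite.of_injective ((V.comap Y.subtype).mapQ V Y.subtype le_rfl) ?_
  rw [← LinearMap.ker_eq_bot, Submodule.ker_mapQ, Submodule.mkQ_map_self]

lemma exists_isSkippedBlockBasis (e : ℕ → X) (P : ℕ → X → Prop) (hP : ∀ j v, P j v → v ≠ 0)
    (h : ∀ j m, ∃ (c : ℕ → ℝ) (q : ℕ), m < q ∧ P j (∑ i ∈ Icc (m + 1) q, c i • e i)) :
    ∃ x, IsSkippedBlockBasis e x ∧ ∀ j, P j (x j) := by
  choose c q hmq hPq using h
  -- block `j + 1` starts two indices after block `j` ends, so index `q j (m j) + 1` is skipped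
  let m : ℕ → ℕ := fun j => Nat.rec 0 (fun j mj => q j mj + 1) j
  refine ⟨fun j => ∑ i ∈ Icc (m j + 1) (q j (m j)), c j (m j) i • e i,
    ⟨fun j => c j (m j), fun j => m j + 1, fun j => q j (m j), fun _ => rfl,
      fun j => hP j _ (hPq j (m j)), fun j => hmq j (m j), fun j => ?_⟩, fun j => hPq j (m j)⟩
  show q j (m j) + 1 < q j (m j) + 1 + 1
  omega

lemma exists_isSkippedBlockBasis_near (e : ℕ → X) (S : Set X) (F : StrongDual ℝ X) {r δ : ℝ}
    (hδ : 0 < δ) {η : ℕ → ℝ} (hη : ∀ j, 0 < η j) (hFη : ∀ j, δ + ‖F‖ * η j ≤ r)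
    (hS : ∀ m, ∃ y ∈ S, y ∈ (tailSpan e m).topologicalClosure ∧ r < F y) :
    ∃ x y : ℕ → X, IsSkippedBlockBasis e x ∧
      ∀ j, y j ∈ S ∧ ‖x j - y j‖ ≤ η j ∧ δ ≤ F (x j) := by
  have hstep : ∀ j m, ∃ (c : ℕ → ℝ) (q : ℕ), m < q ∧
      δ ≤ F (∑ i ∈ Icc (m + 1) q, c i • e i) ∧
        ∃ y ∈ S, ‖∑ i ∈ Icc (m + 1) q, c i • e i - y‖ ≤ η j := by
    intro j m
    obtain ⟨y, hyS, hym, hry⟩ := hS m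
    obtain ⟨c, q, hmq, hcq⟩ := exists_sum_Icc_near_of_mem_closure_tailSpan hym (hη j)
    refine ⟨c, q, hmq, ?_, y, hyS, hcq.le⟩
    have hF : ‖F (∑ i ∈ Icc (m + 1) q, c i • e i - y)‖ ≤ ‖F‖ * η j :=
      (F.le_opNorm _).trans (by gcongr)
    rw [Real.norm_eq_abs, abs_le, map_sub] at hF
    linarith [hF.1, hFη j]
  obtain ⟨x, hxe, hx⟩ := exists_isSkippedBlockBasis e
    (fun j v => δ ≤ F v ∧ ∃ y ∈ S, ‖v - y‖ ≤ η j)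
    (fun j v hv hv0 => by rw [hv0, map_zero] at hv; linarith [hv.1]) hstep
  choose y hyS hy using fun j => (hx j).2
  exact ⟨x, y, hxe, fun j => ⟨hyS j, hy j, (hx j).1⟩⟩

lemma exists_isSkippedBlockBasis_tendsto_norm_sub (e : ℕ → X) (S : Set X) (F : StrongDual ℝ X)
    {r δ : ℝ} (hδ : 0 < δ) (hδr : δ < r)
    (hS : ∀ m, ∃ y ∈ S, y ∈ (tailSpan e m).topologicalClosure ∧ r < F y) :
    ∃ x y : ℕ → X, IsSkippedBlockBasis e x ∧ (∀ j, y j ∈ S ∧ δ ≤ F (x j)) ∧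
      Tendsto (fun j => ‖x j - y j‖) atTop (𝓝 0) := by
  set K := (r - δ) / (‖F‖ + 1) with hKdef
  have hK : ‖F‖ * K ≤ r - δ := calc
    ‖F‖ * K ≤ (‖F‖ + 1) * K :=
      mul_le_mul_of_nonneg_right (by linarith) (div_nonneg (by linarith) (by positivity))
    _ = r - δ := by rw [hKdef]; field_simp
  have hFη : ∀ j : ℕ, δ + ‖F‖ * (K * (1 / (j + 1))) ≤ r := fun j => by
    have : ‖F‖ * (K * (1 / (j + 1))) ≤ ‖F‖ * K := by
      rw [← mul_assoc]
      exact mul_le_of_le_one_right (by positivity) (div_le_one_of_le₀ (by simp) (by positivity))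
    linarith
  obtain ⟨x, y, hxe, hxy⟩ := exists_isSkippedBlockBasis_near e S F hδ
    (fun j => by positivity) hFη hS
  refine ⟨x, y, hxe, fun j => ⟨(hxy j).1, (hxy j).2.2⟩,
    squeeze_zero (fun _ => norm_nonneg _) (fun j => (hxy j).2.1) ?_⟩
  simpa only [mul_zero] using tendsto_one_div_add_atTop_nhds_zero_nat.const_mul K

end BlockBases

section Dual

open TopologicalSpace

variable {E : Type} [NormedAddCommGroup E] [NormedSpace ℝ E]

lemma exists_forall_le_norm_sub_of_not_separableSpace (h : ¬ SeparableSpace E)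
    (W : ℕ → Submodule ℝ E) (hW : ∀ m, FiniteDimensional ℝ (W m)) :
    ∃ (f : E) (d : ℝ), 0 < d ∧ ∀ m, ∀ g ∈ W m, d ≤ ‖f - g‖ := by
  set Z := closure (⋃ m, (W m : Set E))
  have hZ : IsSeparable Z := (IsSeparable.iUnion fun m => by
    have := hW m
    exact IsSeparable.of_subtype _).closure
  obtain ⟨f, hf⟩ : ∃ f, f ∉ Z := by
    by_contra! hall
    exact h (isSeparable_univ_iff.mp (hZ.mono fun f _ => hall f))
  have hZne : Z.Nonempty := ⟨0, subset_closure (Set.mem_iUnion.mpr ⟨0, (W 0).zero_mem⟩)⟩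
  refine ⟨f, Metric.infDist f Z, (isClosed_closure.notMem_iff_infDist_pos hZne).mp hf,
    fun m g hg => ?_⟩
  rw [← dist_eq_norm]
  exact Metric.infDist_le_dist_of_mem (subset_closure (Set.mem_iUnion.mpr ⟨m, hg⟩))

lemma finiteDimensional_polarSubmodule (V : Submodule ℝ E) [FiniteDimensional ℝ (E ⧸ V)] :
    FiniteDimensional ℝ (StrongDual.polarSubmodule ℝ V) := by
  let ψ : StrongDual.polarSubmodule ℝ V →ₗ[ℝ] Module.Dual ℝ (E ⧸ V) :=
    { toFun := fun g => V.liftQ (g : StrongDual ℝ E).toLinearMap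
        fun x hx => LinearMap.mem_ker.mpr ((StrongDual.mem_polarSubmodule ℝ V _).mp g.2 x hx)
      map_add' := fun _ _ => V.linearMap_qext rfl
      map_smul' := fun _ _ => V.linearMap_qext rfl }
  exact Module.Finite.of_injective ψ fun g h hgh =>
    Subtype.ext (ContinuousLinearMap.ext fun x => LinearMap.congr_fun hgh (V.mkQ x))

lemma exists_mem_norm_lt_one_lt_apply {V : Submodule ℝ E} {f : StrongDual ℝ E} {d r : ℝ}
    (h : ∀ g ∈ StrongDual.polarSubmodule ℝ V, d ≤ ‖f - g‖) (hr : r < d) :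
    ∃ y ∈ V, ‖y‖ < 1 ∧ r < f y := by
  obtain ⟨g, hgf, hg⟩ := exists_extension_norm_eq V (f.comp V.subtypeL)
  have hd : d ≤ ‖f.comp V.subtypeL‖ := by
    have := h (f - g) ((StrongDual.mem_polarSubmodule ℝ V _).mpr fun y hy => by
      simp [hgf ⟨y, hy⟩])
    rwa [sub_sub_cancel, hg] at this
  obtain ⟨v, hv1, hrv⟩ := (f.comp V.subtypeL).exists_lt_apply_of_lt_opNorm (hr.trans_le hd)
  rcases le_or_gt 0 (f v) with hv | hv
  · exact ⟨v, v.2, hv1, by simpa [abs_of_nonneg hv] using hrv⟩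
  · exact ⟨-v, V.neg_mem v.2, by simpa using hv1, by simpa [abs_of_neg hv] using hrv⟩

end Dual

def LowerEllOneEstimate {E : Type} [NormedAddCommGroup E] [NormedSpace ℝ E] (c : ℝ)
    (x : ℕ → E) : Prop :=
  ∀ (k : ℕ) (a : ℕ → ℝ), c * ∑ j ∈ range k, |a j| ≤ ‖∑ j ∈ range k, a j • x j‖

namespace LowerEllOneEstimate

variable {E : Type} [NormedAddCommGroup E] [NormedSpace ℝ E] {c : ℝ} {x : ℕ → E}

lemma shift (hx : LowerEllOneEstimate c x) (N : ℕ) :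
    LowerEllOneEstimate c fun j => x (N + j) := by
  intro k a
  set b : ℕ → ℝ := fun i => if N ≤ i then a (i - N) else 0
  have hpad : ∀ {M : Type} [AddCommMonoid M] (g : ℕ → ℝ → M), (∀ i, g i 0 = 0) →
      ∑ i ∈ range (N + k), g i (b i) = ∑ j ∈ range k, g (N + j) (a j) := by
    intro M _ g hg
    rw [sum_range_add, sum_eq_zero fun i hi => ?_, zero_add]
    · simp [b]
    · simp [b, not_le.mpr (mem_range.mp hi), hg]
  simpa only [hpad (fun _ t => |t|) (fun _ => abs_zero),
    hpad (fun i t => t • x i) (fun _ => zero_smul ℝ _)] using hx (N + k) b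

lemma of_norm_sub_le (hx : LowerEllOneEstimate c x) {y : ℕ → E} {ε : ℝ}
    (h : ∀ j, ‖x j - y j‖ ≤ ε) : LowerEllOneEstimate (c - ε) y := by
  intro k a
  have hdiff : ‖∑ j ∈ range k, a j • x j - ∑ j ∈ range k, a j • y j‖
      ≤ ε * ∑ j ∈ range k, |a j| := by
    rw [← sum_sub_distrib, mul_sum]
    refine (norm_sum_le _ _).trans (sum_le_sum fun j _ => ?_)
    rw [← smul_sub, norm_smul, Real.norm_eq_abs, mul_comm ε]
    exact mul_le_mul_of_nonneg_left (h j) (abs_nonneg _)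
  have := norm_sub_norm_le (∑ j ∈ range k, a j • x j) (∑ j ∈ range k, a j • y j)
  rw [sub_mul]
  linarith [hx k a]

lemma of_comp_linearIsometry {F : Type} [NormedAddCommGroup F] [NormedSpace ℝ F]
    (f : E →ₗᵢ[ℝ] F) (hx : LowerEllOneEstimate c (f ∘ x)) : LowerEllOneEstimate c x := by
  intro k a
  simpa [← map_smul, ← map_sum] using hx k a

end LowerEllOneEstimate

lemma IsUnconditionalSeq.exists_lowerEllOneEstimate {E : Type} [NormedAddCommGroup E]
    [NormedSpace ℝ E] {x : ℕ → E} (hx : IsUnconditionalSeq x) (F : StrongDual ℝ E) {δ : ℝ}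
    (hδ : 0 < δ) (hF : ∀ j, δ ≤ F (x j)) : ∃ c > 0, LowerEllOneEstimate c x := by
  obtain ⟨C, hC, hCx⟩ := hx
  refine ⟨δ / ((‖F‖ + 1) * C), by positivity, fun k a => ?_⟩
  set ε : ℕ → ℝ := fun i => if 0 ≤ a i then 1 else -1
  have hε : ∀ i, ε i = 1 ∨ ε i = -1 := fun i => by by_cases h : 0 ≤ a i <;> simp [ε, h]
  have hεa : ∀ i, ε i * a i = |a i| := fun i => by
    by_cases h : 0 ≤ a i
    · simp [ε, h, abs_of_nonneg h]
    · simp [ε, h, abs_of_neg (not_le.mp h)]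
  rw [div_mul_eq_mul_div, div_le_iff₀ (by positivity)]
  calc δ * ∑ j ∈ range k, |a j| ≤ F (∑ j ∈ range k, |a j| • x j) := by
        rw [map_sum, mul_sum]
        refine sum_le_sum fun j _ => ?_
        rw [map_smul, smul_eq_mul, mul_comm]
        exact mul_le_mul_of_nonneg_left (hF j) (abs_nonneg _)
    _ ≤ (‖F‖ + 1) * ‖∑ j ∈ range k, |a j| • x j‖ :=
        (Real.le_norm_self _).trans ((F.le_opNorm _).trans (by gcongr; linarith))
    _ ≤ (‖F‖ + 1) * (C * ‖∑ j ∈ range k, a j • x j‖) := by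
        gcongr
        simpa only [hεa] using hCx k a ε hε
    _ = ‖∑ j ∈ range k, a j • x j‖ * ((‖F‖ + 1) * C) := by ring

lemma embeds_ellOne_of_lowerEllOneEstimate {E : Type} [NormedAddCommGroup E] [NormedSpace ℝ E]
    [CompleteSpace E] {u : ℕ → E} (hu : ∀ j, ‖u j‖ ≤ 1) {c : ℝ} (hc : 0 < c)
    (hlow : LowerEllOneEstimate c u) : Embeds ellOne E := by
  have hnorm : ∀ v : ellOne, ‖v‖ = ∑' j, ‖v j‖ := fun v => by
    simpa using lp.norm_eq_tsum_rpow (p := 1) (by simp) v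
  have hv : ∀ v : ellOne, Summable fun j => ‖v j‖ := fun v => by
    simpa using v.2.summable (by simp)
  have hle : ∀ (v : ellOne) j, ‖v j • u j‖ ≤ ‖v j‖ := fun v j => by
    rw [norm_smul]
    exact mul_le_of_le_one_right (norm_nonneg _) (hu j)
  have hs : ∀ v : ellOne, Summable fun j => ‖v j • u j‖ := fun v =>
    (hv v).of_nonneg_of_le (fun _ => norm_nonneg _) (hle v)
  let T : ellOne →ₗ[ℝ] E :=
    { toFun := fun v => ∑' j, v j • u j
      map_add' := fun v w => by
        simp only [lp.coeFn_add, Pi.add_apply, add_smul]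
        exact (hs v).of_norm.tsum_add (hs w).of_norm
      map_smul' := fun r v => by
        simp only [lp.coeFn_smul, Pi.smul_apply, smul_eq_mul, mul_smul, RingHom.id_apply]
        exact (hs v).of_norm.tsum_const_smul r }
  refine ⟨T, c, 1, hc, one_pos, fun v => ⟨?_, ?_⟩⟩
  · have hlim := (hv v).hasSum.tendsto_sum_nat.const_mul c
    rw [← hnorm] at hlim
    refine le_of_tendsto_of_tendsto' hlim (hs v).of_norm.hasSum.tendsto_sum_nat.norm fun k => ?_
    simpa only [Real.norm_eq_abs] using hlow k (fun j => v j)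
  · calc ‖T v‖ ≤ ∑' j, ‖v j • u j‖ := norm_tsum_le_tsum_norm (hs v)
      _ ≤ ∑' j, ‖v j‖ := (hs v).tsum_le_tsum (hle v) (hv v)
      _ = 1 * ‖v‖ := by rw [one_mul, hnorm]

theorem nonseparable_dual_subspace_contains_l1
    {X : Type} [NormedAddCommGroup X] [NormedSpace ℝ X] [CompleteSpace X]
    (e : ℕ → X) (hbasis : IsSchauderBasis e)
    (hskip : ∀ x : ℕ → X, IsSkippedBlockBasis e x → IsUnconditionalSeq x)
    (Y : Submodule ℝ X) (hYclosed : IsClosed (Y : Set X))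
    (hYdual : ¬ TopologicalSpace.SeparableSpace (StrongDual ℝ ↥Y)) :
    Embeds ellOne ↥Y := by
  have : CompleteSpace Y := hYclosed.completeSpace_coe
  let V : ℕ → Submodule ℝ Y := fun m => (tailSpan e m).topologicalClosure.comap Y.subtype
  let W : ℕ → Submodule ℝ (StrongDual ℝ Y) := fun m => StrongDual.polarSubmodule ℝ (V m)
  have hW : ∀ m, FiniteDimensional ℝ (W m) := fun m =>
    have := finiteDimensional_quotient_closure_tailSpan (fun x => (hbasis x).exists) m
    have := finiteDimensional_quotient_comap_subtype Y (tailSpan e m).topologicalClosure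
    finiteDimensional_polarSubmodule (V m)
  obtain ⟨f, d, hd, hfar⟩ := exists_forall_le_norm_sub_of_not_separableSpace
    (E := StrongDual ℝ Y) hYdual W hW
  obtain ⟨F, hFf, -⟩ := exists_extension_norm_eq Y f
  obtain ⟨x, y, hxe, hxy, hlim⟩ := exists_isSkippedBlockBasis_tendsto_norm_sub e
    (Y ∩ Metric.ball 0 1) F (by positivity : 0 < d / 4) (by linarith : d / 4 < d / 2) fun m => by
      obtain ⟨y, hyV, hy1, hyf⟩ := exists_mem_norm_lt_one_lt_apply (hfar m) (half_lt_self hd)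
      exact ⟨y, ⟨y.2, mem_ball_zero_iff.mpr hy1⟩, hyV, by rwa [hFf]⟩
  obtain ⟨c, hc, hlow⟩ :=
    (hskip x hxe).exists_lowerEllOneEstimate F (by positivity) fun j => (hxy j).2
  obtain ⟨N, hN⟩ := eventually_atTop.mp (hlim.eventually (ge_mem_nhds (half_pos hc)))
  let u : ℕ → Y := fun j => ⟨y (N + j), (hxy (N + j)).1.1⟩
  refine embeds_ellOne_of_lowerEllOneEstimate (u := u)
    (fun j => (mem_ball_zero_iff.mp (hxy (N + j)).1.2).le) (half_pos hc) ?_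
  refine LowerEllOneEstimate.of_comp_linearIsometry Y.subtypeₗᵢ ?_
  have := (hlow.shift N).of_norm_sub_le (y := fun j => y (N + j))
    fun j => hN (N + j) (by omega)
  rwa [sub_half] at this
end

section
/- If (e_i) is a normalized spreading Schauder basis of a Banach space X, then the closed linear span Y of the sequence (e_{2n−1} − e_{2n})_{n≥1} is complemented in X: there exists a bounded linear projection from X onto Y. -/
open Filter Finset Topology NormedSpace
open scoped NNReal

/-!
Write `u n = e (2n) - e (2n+1)`. The projection is `½ T`, where `T e (2n) = u n` and
`T e (2n+1) = -u n`, so that `T x = ∑ (b n - c n) • u n` for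
`x = ∑ (b n • e (2n) + c n • e (2n+1))`; then `T (u n) = 2 u n` and `T` takes values in the closed
span of the `u n`. The point is the estimate `‖T x‖ ≤ K ‖x‖` on finite combinations, which lets
`T` extend from the dense span of the basis to `X`. Spreading along the three ways of placing the
pairs `(2n, 2n+1)` into `(3n, 3n+1, 3n+2)` realises `∑ b n • (e (3n) - e (3n+1))` and
`∑ c n • (e (3n+1) - e (3n+2))` as differences of two spread copies of `x`, and spreading once more
moves each of them back onto the `u n`.
-/

section Interleave

variable {α : Type*}

def interleave (p q : ℕ → α) (i : ℕ) : α := if i % 2 = 0 then p (i / 2) else q (i / 2)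

@[simp]
theorem interleave_two_mul (p q : ℕ → α) (n : ℕ) : interleave p q (2 * n) = p n := by
  simp [interleave]

@[simp]
theorem interleave_two_mul_add_one (p q : ℕ → α) (n : ℕ) :
    interleave p q (2 * n + 1) = q n := by
  simp [interleave, Nat.add_mod, show (2 * n + 1) / 2 = n by omega]

theorem strictMono_interleave {p q : ℕ → ℕ} (hpq : ∀ n, p n < q n)
    (hqp : ∀ n, q n < p (n + 1)) : StrictMono (interleave p q) := by
  refine strictMono_nat_of_lt_succ fun i => ?_
  obtain ⟨n, rfl | rfl⟩ := Nat.even_or_odd' i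
  · simpa using hpq n
  · simpa [show 2 * n + 1 + 1 = 2 * (n + 1) by ring] using hqp n

end Interleave

theorem span_range_interleave_neg_le {R M : Type*} [Ring R] [AddCommGroup M] [Module R M]
    (u : ℕ → M) :
    Submodule.span R (Set.range (interleave u (-u))) ≤ Submodule.span R (Set.range u) := by
  refine Submodule.span_le.2 <| Set.range_subset_iff.2 fun i => ?_
  obtain ⟨n, rfl | rfl⟩ := Nat.even_or_odd' i
  · simpa using Submodule.subset_span (Set.mem_range_self n)
  · simpa using (Submodule.span R (Set.range u)).neg_mem
      (Submodule.subset_span (Set.mem_range_self n))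

theorem Finset.sum_range_two_mul {M : Type*} [AddCommMonoid M] (f : ℕ → M) (k : ℕ) :
    ∑ i ∈ range (2 * k), f i = ∑ n ∈ range k, (f (2 * n) + f (2 * n + 1)) := by
  induction k with
  | zero => simp
  | succ k ih =>
    rw [show 2 * (k + 1) = 2 * k + 1 + 1 by ring, sum_range_succ, sum_range_succ, ih,
      sum_range_succ, add_assoc]

namespace IsSpreading

variable {X : Type} [NormedAddCommGroup X] [NormedSpace ℝ X] {e : ℕ → X}

theorem exists_pair_sums_equiv (he : IsSpreading e) {p q : ℕ → ℕ} (hpq : ∀ n, p n < q n)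
    (hqp : ∀ n, q n < p (n + 1)) :
    ∃ C, 0 ≤ C ∧ ∀ (k : ℕ) (b c : ℕ → ℝ),
      ‖∑ n ∈ range k, (b n • e (2 * n) + c n • e (2 * n + 1))‖ ≤
          C * ‖∑ n ∈ range k, (b n • e (p n) + c n • e (q n))‖ ∧
        ‖∑ n ∈ range k, (b n • e (p n) + c n • e (q n))‖ ≤
          C * ‖∑ n ∈ range k, (b n • e (2 * n) + c n • e (2 * n + 1))‖ := by
  obtain ⟨C, hC, h⟩ := he (interleave p q) (strictMono_interleave hpq hqp)
  refine ⟨C, by linarith, fun k b c => ?_⟩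
  simpa only [sum_range_two_mul, interleave_two_mul, interleave_two_mul_add_one]
    using h (2 * k) (interleave b c)

theorem exists_norm_sum_smul_sub_le (he : IsSpreading e) {p q : ℕ → ℕ} (hpq : ∀ n, p n < q n)
    (hqp : ∀ n, q n < p (n + 1)) :
    ∃ C, 0 ≤ C ∧ ∀ (k : ℕ) (d : ℕ → ℝ),
      ‖∑ n ∈ range k, d n • (e (2 * n) - e (2 * n + 1))‖ ≤
        C * ‖∑ n ∈ range k, d n • (e (p n) - e (q n))‖ := by
  obtain ⟨C, hC, h⟩ := he.exists_pair_sums_equiv hpq hqp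
  refine ⟨C, hC, fun k d => ?_⟩
  simpa only [Pi.neg_apply, neg_smul, smul_sub, sub_eq_add_neg, smul_add, smul_neg]
    using (h k d (-d)).1

theorem exists_norm_sum_sub_smul_le (he : IsSpreading e) :
    ∃ K, ∀ (k : ℕ) (b c : ℕ → ℝ),
      ‖∑ n ∈ range k, (b n - c n) • (e (2 * n) - e (2 * n + 1))‖ ≤
        K * ‖∑ n ∈ range k, (b n • e (2 * n) + c n • e (2 * n + 1))‖ := by
  obtain ⟨C₁, -, h₁⟩ := he.exists_pair_sums_equiv (p := fun n => 3 * n) (q := fun n => 3 * n + 1)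
    (fun n => by omega) (fun n => by omega)
  obtain ⟨C₂, -, h₂⟩ := he.exists_pair_sums_equiv (p := fun n => 3 * n) (q := fun n => 3 * n + 2)
    (fun n => by omega) (fun n => by omega)
  obtain ⟨C₃, -, h₃⟩ := he.exists_pair_sums_equiv (p := fun n => 3 * n + 1)
    (q := fun n => 3 * n + 2) (fun n => by omega) (fun n => by omega)
  obtain ⟨D₁, hD₁, g₁⟩ := he.exists_norm_sum_smul_sub_le (p := fun n => 3 * n)
    (q := fun n => 3 * n + 1) (fun n => by omega) (fun n => by omega)
  obtain ⟨D₃, hD₃, g₃⟩ := he.exists_norm_sum_smul_sub_le (p := fun n => 3 * n + 1)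
    (q := fun n => 3 * n + 2) (fun n => by omega) (fun n => by omega)
  refine ⟨D₁ * (C₂ + C₃) + D₃ * (C₁ + C₂), fun k b c => ?_⟩
  set x := ‖∑ n ∈ range k, (b n • e (2 * n) + c n • e (2 * n + 1))‖
  have hb : ∑ n ∈ range k, b n • (e (3 * n) - e (3 * n + 1)) =
      ∑ n ∈ range k, (b n • e (3 * n) + c n • e (3 * n + 2)) -
        ∑ n ∈ range k, (b n • e (3 * n + 1) + c n • e (3 * n + 2)) := by
    rw [← sum_sub_distrib]
    exact sum_congr rfl fun n _ => by rw [smul_sub]; abel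
  have hc : ∑ n ∈ range k, c n • (e (3 * n + 1) - e (3 * n + 2)) =
      ∑ n ∈ range k, (b n • e (3 * n) + c n • e (3 * n + 1)) -
        ∑ n ∈ range k, (b n • e (3 * n) + c n • e (3 * n + 2)) := by
    rw [← sum_sub_distrib]
    exact sum_congr rfl fun n _ => by rw [smul_sub]; abel
  have hb_le : ‖∑ n ∈ range k, b n • (e (3 * n) - e (3 * n + 1))‖ ≤ (C₂ + C₃) * x := by
    rw [hb, add_mul]
    exact (norm_sub_le _ _).trans (add_le_add (h₂ k b c).2 (h₃ k b c).2)
  have hc_le : ‖∑ n ∈ range k, c n • (e (3 * n + 1) - e (3 * n + 2))‖ ≤ (C₁ + C₂) * x := by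
    rw [hc, add_mul]
    exact (norm_sub_le _ _).trans (add_le_add (h₁ k b c).2 (h₂ k b c).2)
  simp only [sub_smul, sum_sub_distrib]
  calc _ ≤ ‖∑ n ∈ range k, b n • (e (2 * n) - e (2 * n + 1))‖ +
        ‖∑ n ∈ range k, c n • (e (2 * n) - e (2 * n + 1))‖ := norm_sub_le _ _
    _ ≤ D₁ * ((C₂ + C₃) * x) + D₃ * ((C₁ + C₂) * x) :=
        add_le_add ((g₁ k b).trans (by gcongr)) ((g₃ k c).trans (by gcongr))
    _ = _ := by ring

end IsSpreading

def pairDiff {X : Type*} [AddGroup X] (e : ℕ → X) (n : ℕ) : X := e (2 * n) - e (2 * n + 1)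

theorem IsSpreading.exists_norm_linearCombination_le {X : Type} [NormedAddCommGroup X]
    [NormedSpace ℝ X] {e : ℕ → X} (he : IsSpreading e) :
    ∃ K, ∀ a : ℕ →₀ ℝ,
      ‖Finsupp.linearCombination ℝ (interleave (pairDiff e) (-pairDiff e)) a‖ ≤
        K * ‖Finsupp.linearCombination ℝ e a‖ := by
  obtain ⟨K, hK⟩ := he.exists_norm_sum_sub_smul_le
  refine ⟨K, fun a => ?_⟩
  obtain ⟨k, hk⟩ := a.support.exists_nat_subset_range
  have ha : a ∈ Finsupp.supported ℝ ℝ (range (2 * k) : Set ℕ) :=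
    (Finsupp.mem_supported ℝ a).2 fun i hi => by
      simpa using (mem_range.1 (hk hi)).trans_le (by omega : k ≤ 2 * k)
  rw [Finsupp.linearCombination_apply_of_mem_supported ℝ ha,
    Finsupp.linearCombination_apply_of_mem_supported ℝ ha, sum_range_two_mul, sum_range_two_mul]
  simpa only [interleave_two_mul, interleave_two_mul_add_one, Pi.neg_apply, smul_neg,
    ← sub_eq_add_neg, ← sub_smul, pairDiff] using hK k (fun n => a (2 * n)) (fun n => a (2 * n + 1))

theorem IsSchauderBasis.dense_span {X : Type} [NormedAddCommGroup X] [NormedSpace ℝ X]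
    {e : ℕ → X} (he : IsSchauderBasis e) : Dense (Submodule.span ℝ (Set.range e) : Set X) :=
  fun x => by
    obtain ⟨a, ha, -⟩ := he x
    exact mem_closure_of_tendsto ha <| Eventually.of_forall fun n =>
      Submodule.sum_mem _ fun i _ => Submodule.smul_mem _ _ (Submodule.subset_span ⟨i, rfl⟩)

theorem exists_continuousLinearMap_apply_eq_of_norm_linearCombination_le
    {𝕜 ι E F : Type*} [NontriviallyNormedField 𝕜] [NormedAddCommGroup E] [NormedSpace 𝕜 E]
    [NormedAddCommGroup F] [NormedSpace 𝕜 F] [CompleteSpace F] {v : ι → E} {w : ι → F}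
    (hv : Dense (Submodule.span 𝕜 (Set.range v) : Set E)) {K : ℝ}
    (hK : ∀ c : ι →₀ 𝕜,
      ‖Finsupp.linearCombination 𝕜 w c‖ ≤ K * ‖Finsupp.linearCombination 𝕜 v c‖) :
    ∃ T : E →L[𝕜] F, (∀ i, T (v i) = w i) ∧
      ∀ x, T x ∈ (Submodule.span 𝕜 (Set.range w)).topologicalClosure := by
  have hdense : DenseRange (Finsupp.linearCombination 𝕜 v) := by
    rwa [DenseRange, ← LinearMap.coe_range, Finsupp.range_linearCombination]
  have hT := LinearMap.extendOfNorm_eq hdense ⟨K, hK⟩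
  refine ⟨(Finsupp.linearCombination 𝕜 w).extendOfNorm (Finsupp.linearCombination 𝕜 v),
    fun i => by simpa using hT (Finsupp.single i 1), fun x => hdense.induction_on x ?_ ?_⟩
  · exact (Submodule.isClosed_topologicalClosure _).preimage (ContinuousLinearMap.continuous _)
  · intro c
    rw [hT, ← Finsupp.range_linearCombination]
    exact Submodule.le_topologicalClosure _ (LinearMap.mem_range_self _ c)

theorem ContinuousLinearMap.isProj_topologicalClosure_span {𝕜 E : Type*}
    [Ring 𝕜] [AddCommGroup E] [TopologicalSpace E] [IsTopologicalAddGroup E] [T1Space E]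
    [Module 𝕜 E] [ContinuousConstSMul 𝕜 E] (P : E →L[𝕜] E) {s : Set E}
    (hP : ∀ x, P x ∈ (Submodule.span 𝕜 s).topologicalClosure) (hs : ∀ v ∈ s, P v = v) :
    LinearMap.IsProj (Submodule.span 𝕜 s).topologicalClosure (P : E →ₗ[𝕜] E) := by
  refine ⟨hP, fun y hy => sub_eq_zero.1 ?_⟩
  have hker : (Submodule.span 𝕜 s).topologicalClosure ≤
      LinearMap.ker ((P - 1 : E →L[𝕜] E) : E →ₗ[𝕜] E) :=
    Submodule.topologicalClosure_minimal _
      (Submodule.span_le.2 fun v hv => by simp [hs v hv]) (P - 1).isClosed_ker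
  simpa using hker hy

theorem difference_subspace_complemented_general
    {X : Type} [NormedAddCommGroup X] [NormedSpace ℝ X] [CompleteSpace X]
    (e : ℕ → X) (hbasis : IsSchauderBasis e)
    (hspread : IsSpreading e) :
    ∃ P : X →L[ℝ] X, (∀ x, P (P x) = P x) ∧
      LinearMap.range (P : X →ₗ[ℝ] X) =
        (Submodule.span ℝ (Set.range fun n => e (2 * n) - e (2 * n + 1))).topologicalClosure := by
  obtain ⟨K, hK⟩ := hspread.exists_norm_linearCombination_le
  obtain ⟨T, hTe, hT⟩ :=
    exists_continuousLinearMap_apply_eq_of_norm_linearCombination_le hbasis.dense_span hK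
  have hP : LinearMap.IsProj (Submodule.span ℝ (Set.range (pairDiff e))).topologicalClosure
      (((2 : ℝ)⁻¹ • T : X →L[ℝ] X) : X →ₗ[ℝ] X) := by
    refine ContinuousLinearMap.isProj_topologicalClosure_span _
      (fun x => Submodule.smul_mem _ _
        (Submodule.topologicalClosure_mono (span_range_interleave_neg_le _) (hT x))) ?_
    rintro _ ⟨n, rfl⟩
    have hTn : T (e (2 * n) - e (2 * n + 1)) = (2 : ℝ) • pairDiff e n := by
      rw [map_sub, hTe, hTe, interleave_two_mul, interleave_two_mul_add_one, Pi.neg_apply,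
        sub_neg_eq_add, two_smul]
    change (2 : ℝ)⁻¹ • T (e (2 * n) - e (2 * n + 1)) = pairDiff e n
    rw [hTn, smul_smul, inv_mul_cancel₀ two_ne_zero, one_smul]
  exact ⟨(2 : ℝ)⁻¹ • T, fun x => hP.map_id _ (hP.map_mem x), hP.range⟩

theorem difference_subspace_complemented
    {X : Type} [NormedAddCommGroup X] [NormedSpace ℝ X] [CompleteSpace X]
    (e : ℕ → X) (hnorm : ∀ i, ‖e i‖ = 1) (hbasis : IsSchauderBasis e)
    (hspread : IsSpreading e) :
    ∃ P : X →L[ℝ] X, (∀ x, P (P x) = P x) ∧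
      LinearMap.range (P : X →ₗ[ℝ] X) =
        (Submodule.span ℝ (Set.range fun n => e (2 * n) - e (2 * n + 1))).topologicalClosure :=
  difference_subspace_complemented_general e hbasis hspread
end

section
/- Let (e_i) be a normalized bimonotone 1-spreading Schauder basis for a Banach space X. Let (σ_j)_{j≥1} be a partition of ℕ into successive nonempty finite intervals σ_1 < σ_2 < … with |σ_j| = n_j. Then the averaging operator Q defined by Q(Σ_i a_i e_i) = Σ_j ((Σ_{i∈σ_j} a_i)/n_j)(Σ_{i∈σ_j} e_i) is a well-defined bounded linear projection on X with ‖Q‖ ≤ 3. -/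
open Filter Finset Topology NormedSpace
open scoped NNReal

/-!
Spread each block `σⱼ = [p j, p (j + 1))`, of length `n`, into the middle third of
`[3 p j, 3 p (j + 1))`. Rotating every block cyclically inside its middle third is, position by
position, `e ∘ shift + e ∘ wrapLow - e ∘ wrapHigh` for three strictly increasing maps, so by
1-spreading each rotated copy of `x = ∑ aᵢ eᵢ` has norm at most `3 ‖x‖`. Averaging over the
rotations by `m < L`, with `L` a common multiple of the block lengths, replaces every block by its
mean, and by 1-spreading again this average has the norm of `Q x`. Hence `‖Q x‖ ≤ 3 ‖x‖` for finite
expansions, the averaged partial sums of any `x` are Cauchy, and their limit `Q` has norm at most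
`3`. Since `Q` fixes every block mean and is continuous, it is idempotent.
-/

lemma Finset.sum_range_add_mod {M : Type*} [AddCommMonoid M] (f : ℕ → M) (n u : ℕ) :
    ∑ t ∈ range n, f ((u + t) % n) = ∑ t ∈ range n, f t := by
  rcases n with _ | n
  · simp
  rw [← Fin.sum_univ_eq_sum_range (fun t => f ((u + t) % (n + 1))), ← Fin.sum_univ_eq_sum_range f]
  exact Fintype.sum_equiv (Equiv.addLeft (Fin.ofNat (n + 1) u)) _ _ fun t => by
    simp [Fin.val_add]

lemma Finset.sum_range_mul_add_mod {M : Type*} [AddCommMonoid M] (f : ℕ → M) (n c u : ℕ) :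
    ∑ m ∈ range (n * c), f ((u + m) % n) = c • ∑ v ∈ range n, f v := by
  induction c with
  | zero => simp
  | succ c ih =>
    rw [Nat.mul_succ, sum_range_add, ih, succ_nsmul, ← sum_range_add_mod f n u]
    congr 1
    refine sum_congr rfl fun t _ => ?_
    rw [← add_assoc, add_right_comm, Nat.add_mul_mod_self_left]

lemma Finset.sum_range_sum_smul_add_mod {M : Type*} [AddCommGroup M] [Module ℝ M]
    (b : ℕ → ℝ) (f : ℕ → M) {n L : ℕ} (hn : 0 < n) (hL : n ∣ L) :
    ∑ m ∈ range L, ∑ u ∈ range n, b u • f ((u + m) % n) =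
      (L : ℝ) • ∑ u ∈ range n, ((n : ℝ)⁻¹ * ∑ u' ∈ range n, b u') • f u := by
  obtain ⟨c, rfl⟩ := hL
  have hn' : (n : ℝ) ≠ 0 := by positivity
  rw [sum_comm]
  simp_rw [← smul_sum, sum_range_mul_add_mod, ← Nat.cast_smul_eq_nsmul ℝ, smul_smul, ← sum_smul]
  congr 1
  push_cast
  field_simp
  rw [← sum_mul, mul_comm]

theorem CauchySeq.of_dist_le_mul {α β : Type*} [PseudoMetricSpace α] [PseudoMetricSpace β]
    {u : ℕ → α} {v : ℕ → β} (hv : CauchySeq v) (C : ℝ)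
    (h : ∀ J K, J ≤ K → dist (u J) (u K) ≤ C * dist (v J) (v K)) : CauchySeq u := by
  have h' : ∀ J K, dist (u J) (u K) ≤ C * dist (v J) (v K) := fun J K => by
    rcases le_total J K with hJK | hKJ
    · exact h J K hJK
    · rw [dist_comm, dist_comm (v J)]
      exact h K J hKJ
  rw [cauchySeq_iff_tendsto_dist_atTop_0] at hv ⊢
  exact squeeze_zero (fun _ => dist_nonneg) (fun n : ℕ × ℕ => h' n.1 n.2)
    (by simpa using hv.const_mul C)

namespace Blocks

def blockIdx (p : ℕ → ℕ) (i : ℕ) : ℕ := Nat.findGreatest (fun j => p j ≤ i) i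

noncomputable def blockAvg {M : Type*} [AddCommGroup M] [Module ℝ M] (p : ℕ → ℕ) (f : ℕ → M)
    (j : ℕ) : M :=
  ((p (j + 1) - p j : ℕ) : ℝ)⁻¹ • ∑ i ∈ Ico (p j) (p (j + 1)), f i

variable {p : ℕ → ℕ}

lemma blockIdx_eq (hp : StrictMono p) {i j : ℕ} (hi : i ∈ Ico (p j) (p (j + 1))) :
    blockIdx p i = j := by
  obtain ⟨h₁, h₂⟩ := mem_Ico.1 hi
  refine Nat.findGreatest_eq_iff.2 ⟨(hp.id_le j).trans h₁, fun _ => h₁, fun k hjk _ hk => ?_⟩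
  have : p (j + 1) ≤ p k := hp.monotone hjk
  omega

lemma blockIdx_add (hp : StrictMono p) {j u : ℕ} (hu : u < p (j + 1) - p j) :
    blockIdx p (p j + u) = j :=
  blockIdx_eq hp (mem_Ico.2 ⟨by omega, by omega⟩)

lemma blockIdx_mem (hp : StrictMono p) (hp0 : p 0 = 0) (i : ℕ) :
    p (blockIdx p i) ≤ i ∧ i < p (blockIdx p i + 1) := by
  refine ⟨Nat.findGreatest_spec (P := fun j => p j ≤ i) (Nat.zero_le i) (by simp [hp0]), ?_⟩
  by_contra! h
  exact Nat.findGreatest_is_greatest (Nat.lt_succ_self _) ((hp.id_le _).trans h) h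

lemma exists_eq_block_add (hp : StrictMono p) (hp0 : p 0 = 0) (i : ℕ) :
    ∃ j u, u < p (j + 1) - p j ∧ i = p j + u := by
  obtain ⟨h₁, h₂⟩ := blockIdx_mem hp hp0 i
  exact ⟨blockIdx p i, i - p (blockIdx p i), by omega, by omega⟩

lemma sum_range_eq_sum_blocks {M : Type*} [AddCommMonoid M] (hp : StrictMono p) (hp0 : p 0 = 0)
    (f : ℕ → M) (J : ℕ) :
    ∑ i ∈ range (p J), f i = ∑ j ∈ range J, ∑ i ∈ Ico (p j) (p (j + 1)), f i := by
  induction J with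
  | zero => simp [hp0]
  | succ J ih =>
    rw [sum_range_succ, ← ih, sum_range_add_sum_Ico _ (hp.monotone J.le_succ)]

lemma sum_smul_blockAvg_comm {X : Type*} [AddCommGroup X] [Module ℝ X] (hp : StrictMono p)
    (hp0 : p 0 = 0) (a : ℕ → ℝ) (e : ℕ → X) (J : ℕ) :
    ∑ i ∈ range (p J), a i • blockAvg p e (blockIdx p i) =
      ∑ i ∈ range (p J), blockAvg p a (blockIdx p i) • e i := by
  simp only [sum_range_eq_sum_blocks hp hp0]
  refine sum_congr rfl fun j _ => ?_
  calc _ = ∑ i ∈ Ico (p j) (p (j + 1)), a i • blockAvg p e j :=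
        sum_congr rfl fun i hi => by rw [blockIdx_eq hp hi]
    _ = ∑ i ∈ Ico (p j) (p (j + 1)), blockAvg p a j • e i := by
        rw [← sum_smul, ← smul_sum, blockAvg, blockAvg, smul_smul, smul_eq_mul, mul_comm]
    _ = _ := sum_congr rfl fun i hi => by rw [blockIdx_eq hp hi]

def blockMap (p : ℕ → ℕ) (g : ℕ → ℕ → ℕ) (i : ℕ) : ℕ :=
  3 * p (blockIdx p i) + g (blockIdx p i) (i - p (blockIdx p i))

lemma blockMap_add (hp : StrictMono p) (g : ℕ → ℕ → ℕ) {j u : ℕ} (hu : u < p (j + 1) - p j) :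
    blockMap p g (p j + u) = 3 * p j + g j u := by
  rw [blockMap, blockIdx_add hp hu, Nat.add_sub_cancel_left]

lemma strictMono_blockMap (hp : StrictMono p) (hp0 : p 0 = 0) {g : ℕ → ℕ → ℕ}
    (hstep : ∀ j u, u + 1 < p (j + 1) - p j → g j u < g j (u + 1))
    (hbound : ∀ j u, u < p (j + 1) - p j → g j u < 3 * (p (j + 1) - p j)) :
    StrictMono (blockMap p g) := by
  refine strictMono_nat_of_lt_succ fun i => ?_
  obtain ⟨j, u, hu, rfl⟩ := exists_eq_block_add hp hp0 i
  rw [blockMap_add hp g hu]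
  by_cases hnext : p j + u + 1 < p (j + 1)
  · rw [add_assoc, blockMap_add hp g (by omega)]
    have := hstep j u (by omega)
    omega
  · have hj : p j + u + 1 = p (j + 1) + 0 := by omega
    have : p (j + 1) < p (j + 1 + 1) := hp (by omega)
    rw [hj, blockMap_add hp g (by omega)]
    have := hbound j u hu
    omega

def modBlockMap (p : ℕ → ℕ) (loc : ℕ → ℕ → ℕ → ℕ) (m : ℕ) : ℕ → ℕ :=
  blockMap p fun j u => loc (p (j + 1) - p j) (m % (p (j + 1) - p j)) u

lemma modBlockMap_add (hp : StrictMono p) (loc : ℕ → ℕ → ℕ → ℕ) (m : ℕ) {j u : ℕ}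
    (hu : u < p (j + 1) - p j) :
    modBlockMap p loc m (p j + u) =
      3 * p j + loc (p (j + 1) - p j) (m % (p (j + 1) - p j)) u :=
  blockMap_add hp _ hu

lemma strictMono_modBlockMap (hp : StrictMono p) (hp0 : p 0 = 0) {loc : ℕ → ℕ → ℕ → ℕ}
    (hstep : ∀ n r u, r < n → u + 1 < n → loc n r u < loc n r (u + 1))
    (hbound : ∀ n r u, r < n → u < n → loc n r u < 3 * n) (m : ℕ) :
    StrictMono (modBlockMap p loc m) :=
  strictMono_blockMap hp hp0 (fun _ _ hu => hstep _ _ _ (Nat.mod_lt _ (by omega)) hu)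
    (fun _ _ hu => hbound _ _ _ (Nat.mod_lt _ (by omega)) hu)

def rotate (n r u : ℕ) : ℕ := n + (u + r) % n

def shift (n r u : ℕ) : ℕ := n + u + r

def wrapLow (n r u : ℕ) : ℕ := if u + r < n then u else u + r

def wrapHigh (n r u : ℕ) : ℕ := if u + r < n then u else n + u + r

-- At every `u` the positions `{rotate, wrapHigh}` and `{shift, wrapLow}` agree as multisets.
lemma rotate_eq {G : Type*} [AddCommGroup G] (f : ℕ → G) {n r u : ℕ} (hr : r < n) (hu : u < n) :
    f (rotate n r u) = f (shift n r u) + f (wrapLow n r u) - f (wrapHigh n r u) := by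
  rw [rotate, shift, wrapLow, wrapHigh]
  split_ifs with h
  · rw [Nat.mod_eq_of_lt h, add_sub_cancel_right, add_assoc]
  · rw [Nat.mod_eq_sub_mod (not_lt.1 h), Nat.mod_eq_of_lt (by omega), add_sub_cancel_left]
    congr 1
    omega

lemma modBlockMap_rotate_eq {G : Type*} [AddCommGroup G] (hp : StrictMono p) (hp0 : p 0 = 0)
    (f : ℕ → G) (m i : ℕ) :
    f (modBlockMap p rotate m i) =
      f (modBlockMap p shift m i) + f (modBlockMap p wrapLow m i) -
        f (modBlockMap p wrapHigh m i) := by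
  obtain ⟨j, u, hu, rfl⟩ := exists_eq_block_add hp hp0 i
  simp only [modBlockMap_add hp _ m hu]
  exact rotate_eq (fun v => f (3 * p j + v)) (Nat.mod_lt _ (by omega)) hu

lemma strictMono_modBlockMap_shift (hp : StrictMono p) (hp0 : p 0 = 0) (m : ℕ) :
    StrictMono (modBlockMap p shift m) :=
  strictMono_modBlockMap hp hp0 (fun _ _ _ _ _ => by simp only [shift]; omega)
    (fun _ _ _ _ _ => by simp only [shift]; omega) m

lemma strictMono_modBlockMap_wrapLow (hp : StrictMono p) (hp0 : p 0 = 0) (m : ℕ) :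
    StrictMono (modBlockMap p wrapLow m) :=
  strictMono_modBlockMap hp hp0 (fun _ _ _ _ _ => by simp only [wrapLow]; split_ifs <;> omega)
    (fun _ _ _ _ _ => by simp only [wrapLow]; split_ifs <;> omega) m

lemma strictMono_modBlockMap_wrapHigh (hp : StrictMono p) (hp0 : p 0 = 0) (m : ℕ) :
    StrictMono (modBlockMap p wrapHigh m) :=
  strictMono_modBlockMap hp hp0 (fun _ _ _ _ _ => by simp only [wrapHigh]; split_ifs <;> omega)
    (fun _ _ _ _ _ => by simp only [wrapHigh]; split_ifs <;> omega) m

lemma sum_range_sum_smul_rotate {M : Type*} [AddCommGroup M] [Module ℝ M] (hp : StrictMono p)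
    (hp0 : p 0 = 0) (a : ℕ → ℝ) (e : ℕ → M) {J L : ℕ} (hL : ∀ j < J, p (j + 1) - p j ∣ L) :
    ∑ m ∈ range L, ∑ i ∈ range (p J), a i • e (modBlockMap p rotate m i) =
      (L : ℝ) • ∑ i ∈ range (p J), blockAvg p a (blockIdx p i) • e (modBlockMap p shift 0 i) := by
  simp only [sum_range_eq_sum_blocks hp hp0 _ J, sum_Ico_eq_sum_range]
  rw [sum_comm, smul_sum]
  refine sum_congr rfl fun j hj => ?_
  have hn : 0 < p (j + 1) - p j := Nat.sub_pos_of_lt (hp j.lt_succ_self)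
  calc _ = ∑ m ∈ range L, ∑ u ∈ range (p (j + 1) - p j),
          a (p j + u) • e (3 * p j + (p (j + 1) - p j + (u + m) % (p (j + 1) - p j))) := by
        refine sum_congr rfl fun m _ => sum_congr rfl fun u hu => ?_
        rw [modBlockMap_add hp _ _ (mem_range.1 hu), rotate, Nat.add_mod_mod]
    _ = _ := by
        rw [sum_range_sum_smul_add_mod _ (fun v => e (3 * p j + (p (j + 1) - p j + v))) hn
          (hL j (mem_range.1 hj))]
        refine congrArg _ (sum_congr rfl fun u hu => ?_)
        rw [modBlockMap_add hp _ _ (mem_range.1 hu), blockIdx_add hp (mem_range.1 hu), blockAvg,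
          sum_Ico_eq_sum_range, smul_eq_mul, shift, Nat.zero_mod, add_zero]

end Blocks

section

variable {X : Type} [NormedAddCommGroup X] [NormedSpace ℝ X]

open Blocks

theorem IsOneSpreading.norm_sum_smul_add_sub_le {e : ℕ → X} (he : IsOneSpreading e)
    {R A B C : ℕ → ℕ} (hA : StrictMono A) (hB : StrictMono B) (hC : StrictMono C)
    (hR : ∀ i, e (R i) = e (A i) + e (B i) - e (C i)) (a : ℕ → ℝ) (N : ℕ) :
    ‖∑ i ∈ range N, a i • e (R i)‖ ≤ 3 * ‖∑ i ∈ range N, a i • e i‖ := by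
  simp only [hR, smul_sub, smul_add, sum_sub_distrib, sum_add_distrib]
  calc _ ≤ ‖∑ i ∈ range N, a i • e (A i)‖ + ‖∑ i ∈ range N, a i • e (B i)‖ +
        ‖∑ i ∈ range N, a i • e (C i)‖ := norm_sub_le_of_le (norm_add_le _ _) le_rfl
    _ = _ := by rw [he N a A hA, he N a B hB, he N a C hC]; ring

theorem IsOneSpreading.norm_sum_smul_blockAvg_le {e : ℕ → X} (he : IsOneSpreading e)
    {p : ℕ → ℕ} (hp : StrictMono p) (hp0 : p 0 = 0) (a : ℕ → ℝ) (J : ℕ) :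
    ‖∑ i ∈ range (p J), a i • blockAvg p e (blockIdx p i)‖ ≤
      3 * ‖∑ i ∈ range (p J), a i • e i‖ := by
  set L := ∏ j ∈ range J, (p (j + 1) - p j)
  have hL : (0 : ℝ) < L :=
    Nat.cast_pos.2 <| prod_pos fun j _ => Nat.sub_pos_of_lt (hp j.lt_succ_self)
  have hrot : ∀ m, ‖∑ i ∈ range (p J), a i • e (modBlockMap p rotate m i)‖ ≤
      3 * ‖∑ i ∈ range (p J), a i • e i‖ := fun m =>
    he.norm_sum_smul_add_sub_le (strictMono_modBlockMap_shift hp hp0 m)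
      (strictMono_modBlockMap_wrapLow hp hp0 m) (strictMono_modBlockMap_wrapHigh hp hp0 m)
      (modBlockMap_rotate_eq hp hp0 e m) a (p J)
  rw [sum_smul_blockAvg_comm hp hp0, ← he _ _ _ (strictMono_modBlockMap_shift hp hp0 0)]
  refine le_of_mul_le_mul_left ?_ hL
  calc (L : ℝ) * ‖∑ i ∈ range (p J), blockAvg p a (blockIdx p i) • e (modBlockMap p shift 0 i)‖
      = ‖∑ m ∈ range L, ∑ i ∈ range (p J), a i • e (modBlockMap p rotate m i)‖ := by
        rw [sum_range_sum_smul_rotate hp hp0 a e fun j hj => dvd_prod_of_mem _ (mem_range.2 hj),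
          norm_smul, Real.norm_natCast]
    _ ≤ ∑ m ∈ range L, ‖∑ i ∈ range (p J), a i • e (modBlockMap p rotate m i)‖ := norm_sum_le _ _
    _ ≤ ∑ m ∈ range L, 3 * ‖∑ i ∈ range (p J), a i • e i‖ := sum_le_sum fun m _ => hrot m
    _ = L * (3 * ‖∑ i ∈ range (p J), a i • e i‖) := by rw [sum_const, card_range, nsmul_eq_mul]

theorem IsOneSpreading.norm_sum_Ico_smul_blockAvg_le {e : ℕ → X} (he : IsOneSpreading e)
    {p : ℕ → ℕ} (hp : StrictMono p) (hp0 : p 0 = 0) (a : ℕ → ℝ) (J K : ℕ) :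
    ‖∑ i ∈ Ico (p J) (p K), a i • blockAvg p e (blockIdx p i)‖ ≤
      3 * ‖∑ i ∈ Ico (p J) (p K), a i • e i‖ := by
  have hrestrict : ∀ w : ℕ → X,
      ∑ i ∈ range (p K), (if p J ≤ i then a i else 0) • w i = ∑ i ∈ Ico (p J) (p K), a i • w i :=
    fun w => by
      simp only [ite_smul, zero_smul, ← sum_filter]
      congr 1
      ext i
      simp only [mem_filter, mem_range, mem_Ico]
      omega
  simpa only [hrestrict] using
    he.norm_sum_smul_blockAvg_le hp hp0 (fun i => if p J ≤ i then a i else 0) K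

namespace IsSchauderBasis

variable {e : ℕ → X} (hb : IsSchauderBasis e)

noncomputable def coeff (x : X) : ℕ → ℝ := (hb x).choose

lemma tendsto_sum_coeff_smul (x : X) :
    Tendsto (fun N => ∑ i ∈ range N, hb.coeff x i • e i) atTop (𝓝 x) :=
  (hb x).choose_spec.1

lemma coeff_eq_of_tendsto {x : X} {a : ℕ → ℝ}
    (h : Tendsto (fun N => ∑ i ∈ range N, a i • e i) atTop (𝓝 x)) : hb.coeff x = a :=
  ((hb x).choose_spec.2 a h).symm

lemma coeff_add (x y : X) : hb.coeff (x + y) = hb.coeff x + hb.coeff y :=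
  hb.coeff_eq_of_tendsto <| by
    simpa only [Pi.add_apply, add_smul, sum_add_distrib] using
      (hb.tendsto_sum_coeff_smul x).add (hb.tendsto_sum_coeff_smul y)

lemma coeff_smul (c : ℝ) (x : X) : hb.coeff (c • x) = c • hb.coeff x :=
  hb.coeff_eq_of_tendsto <| by
    simpa only [Pi.smul_apply, smul_eq_mul, ← smul_smul, ← smul_sum] using
      (hb.tendsto_sum_coeff_smul x).const_smul c

lemma coeff_basis (i : ℕ) : hb.coeff (e i) = Pi.single i 1 :=
  hb.coeff_eq_of_tendsto <| tendsto_atTop_of_eventually_const (i₀ := i + 1) fun N hN => by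
    simp [Pi.single_apply, ite_smul, show i < N by omega]

noncomputable def coord (i : ℕ) : X →ₗ[ℝ] ℝ where
  toFun x := hb.coeff x i
  map_add' x y := by simp [coeff_add]
  map_smul' c x := by simp [coeff_smul]

noncomputable def partialAvg (p : ℕ → ℕ) (J : ℕ) : X →ₗ[ℝ] X :=
  ∑ i ∈ range (p J), (hb.coord i).smulRight (blockAvg p e (blockIdx p i))

lemma partialAvg_apply (p : ℕ → ℕ) (J : ℕ) (x : X) :
    hb.partialAvg p J x = ∑ i ∈ range (p J), hb.coeff x i • blockAvg p e (blockIdx p i) := by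
  simp [partialAvg, coord]

variable {p : ℕ → ℕ}

lemma norm_partialAvg_le (he : IsOneSpreading e) (hp : StrictMono p) (hp0 : p 0 = 0)
    (J : ℕ) (x : X) :
    ‖hb.partialAvg p J x‖ ≤ 3 * ‖∑ i ∈ range (p J), hb.coeff x i • e i‖ := by
  rw [partialAvg_apply]
  exact he.norm_sum_smul_blockAvg_le hp hp0 _ J

lemma cauchySeq_partialAvg (he : IsOneSpreading e) (hp : StrictMono p) (hp0 : p 0 = 0) (x : X) :
    CauchySeq fun J => hb.partialAvg p J x := by
  refine ((hb.tendsto_sum_coeff_smul x).cauchySeq.comp_tendsto hp.tendsto_atTop).of_dist_le_mul 3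
    fun J K hJK => ?_
  simp only [Function.comp_apply, dist_eq_norm', partialAvg_apply,
    ← sum_Ico_eq_sub _ (hp.monotone hJK)]
  exact he.norm_sum_Ico_smul_blockAvg_le hp hp0 _ J K

variable [CompleteSpace X]

lemma tendsto_partialAvg_limUnder (he : IsOneSpreading e) (hp : StrictMono p) (hp0 : p 0 = 0)
    (x : X) :
    Tendsto (fun J => hb.partialAvg p J x) atTop
      (𝓝 (limUnder atTop fun J => hb.partialAvg p J x)) :=
  tendsto_nhds_limUnder (cauchySeq_tendsto_of_complete (hb.cauchySeq_partialAvg he hp hp0 x))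

noncomputable def averagingProjection (he : IsOneSpreading e) (hp : StrictMono p) (hp0 : p 0 = 0) :
    X →L[ℝ] X :=
  LinearMap.mkContinuous
    (linearMapOfTendsto _ (hb.partialAvg p)
      (tendsto_pi_nhds.2 (hb.tendsto_partialAvg_limUnder he hp hp0)))
    3 fun x => le_of_tendsto_of_tendsto' (hb.tendsto_partialAvg_limUnder he hp hp0 x).norm
      (((hb.tendsto_sum_coeff_smul x).comp hp.tendsto_atTop).norm.const_mul 3)
      fun J => hb.norm_partialAvg_le he hp hp0 J x

variable (he : IsOneSpreading e) (hp : StrictMono p) (hp0 : p 0 = 0)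

lemma tendsto_partialAvg (x : X) :
    Tendsto (fun J => hb.partialAvg p J x) atTop (𝓝 (hb.averagingProjection he hp hp0 x)) :=
  hb.tendsto_partialAvg_limUnder he hp hp0 x

lemma norm_averagingProjection_le : ‖hb.averagingProjection he hp hp0‖ ≤ 3 :=
  LinearMap.mkContinuous_norm_le _ (by norm_num) _

lemma averagingProjection_basis {i : ℕ} :
    hb.averagingProjection he hp hp0 (e i) = blockAvg p e (blockIdx p i) := by
  refine tendsto_nhds_unique (hb.tendsto_partialAvg he hp hp0 (e i))
    (tendsto_atTop_of_eventually_const (i₀ := i + 1) fun J hJ => ?_)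
  have hJ' : J ≤ p J := hp.id_le J
  have : i < p J := by omega
  simp [partialAvg_apply, coeff_basis, Pi.single_apply, ite_smul, this]

lemma averagingProjection_blockAvg (j : ℕ) :
    hb.averagingProjection he hp hp0 (blockAvg p e j) = blockAvg p e j := by
  have hn : ((p (j + 1) - p j : ℕ) : ℝ) ≠ 0 := by
    have : p j < p (j + 1) := hp (by omega)
    exact Nat.cast_ne_zero.2 (by omega)
  conv_lhs => rw [blockAvg, map_smul, map_sum]
  rw [sum_congr rfl fun i hi => by rw [averagingProjection_basis, blockIdx_eq hp hi], sum_const,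
    Nat.card_Ico, ← Nat.cast_smul_eq_nsmul ℝ, smul_smul, inv_mul_cancel₀ hn, one_smul]

lemma averagingProjection_idem (x : X) :
    hb.averagingProjection he hp hp0 (hb.averagingProjection he hp hp0 x) =
      hb.averagingProjection he hp hp0 x := by
  have h := hb.tendsto_partialAvg he hp hp0 x
  refine tendsto_nhds_unique (((hb.averagingProjection he hp hp0).continuous.tendsto _).comp h) ?_
  convert h using 2 with J
  simp [partialAvg_apply, averagingProjection_blockAvg]

end IsSchauderBasis

end

theorem averaging_projection_bounded_general
    {X : Type} [NormedAddCommGroup X] [NormedSpace ℝ X] [CompleteSpace X]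
    (e : ℕ → X) (hbasis : IsSchauderBasis e)
    (hspread : IsOneSpreading e)
    -- the intervals `σ j = [p j, p (j+1))` partition `ℕ`
    (p : ℕ → ℕ) (hp0 : p 0 = 0) (hpmono : StrictMono p) :
    ∃ Q : X →L[ℝ] X, ‖Q‖ ≤ 3 ∧ (∀ x, Q (Q x) = Q x) ∧
      ∀ j : ℕ, ∀ i ∈ Finset.Ico (p j) (p (j + 1)),
        Q (e i) = (((p (j + 1) - p j : ℕ) : ℝ))⁻¹ •
          ∑ i' ∈ Finset.Ico (p j) (p (j + 1)), e i' := by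
  refine ⟨hbasis.averagingProjection hspread hpmono hp0,
    hbasis.norm_averagingProjection_le hspread hpmono hp0,
    hbasis.averagingProjection_idem hspread hpmono hp0, fun j i hi => ?_⟩
  rw [hbasis.averagingProjection_basis hspread hpmono hp0,
    Blocks.blockIdx_eq hpmono hi, Blocks.blockAvg]

theorem averaging_projection_bounded
    {X : Type} [NormedAddCommGroup X] [NormedSpace ℝ X] [CompleteSpace X]
    (e : ℕ → X) (hnorm : ∀ i, ‖e i‖ = 1) (hbasis : IsSchauderBasis e)
    (hspread : IsOneSpreading e) (hbi : IsBimonotone e)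
    -- the intervals `σ j = [p j, p (j+1))` partition `ℕ`
    (p : ℕ → ℕ) (hp0 : p 0 = 0) (hpmono : StrictMono p) :
    ∃ Q : X →L[ℝ] X, ‖Q‖ ≤ 3 ∧ (∀ x, Q (Q x) = Q x) ∧
      ∀ j : ℕ, ∀ i ∈ Finset.Ico (p j) (p (j + 1)),
        Q (e i) = (((p (j + 1) - p j : ℕ) : ℝ))⁻¹ •
          ∑ i' ∈ Finset.Ico (p j) (p (j + 1)), e i' :=
  averaging_projection_bounded_general e hbasis hspread p hp0 hpmono
end

section
/- (Gap Lemma) Let ε > 0, M ∈ ℕ, and K ≥ 1. Then there exists N = N(ε, M, K) ∈ ℕ such that: for any Banach space X, any finite sequences (x_l^1)_{l=1}^N, …, (x_l^M)_{l=1}^N in X each of which is K-equivalent to the unit vector basis of ℓ∞^N, and any functionals (f_l^1)_{l=1}^N, …, (f_l^M)_{l=1}^N in X* each of norm at most 1, there exist indices l_1, …, l_M ∈ {1,…,N} such that |f_{l_j}^j(x_{l_i}^i)| < ε for all i ≠ j. -/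
/-!
Testing a functional `f` with `‖f‖ ≤ 1` on the sign vector of `(f (z l))_l` gives
`∑ l, |f (z l)| ≤ K` whenever `z` satisfies the upper `ℓ∞^N` estimate, so `|f (z l)| ≥ ε` for at
most `D = ⌈K / ε⌉` indices `l`. Hence, for each pair `i ≠ j`, at most a fraction `D / N` of all
choices `l : Fin M → Fin N` has `|f j (l j) (x i (l i))| ≥ ε`, and as soon as `N > M² D` some
choice avoids all of these events.
-/

open Filter Finset Topology NormedSpace
open scoped NNReal

/-- A finite sequence `z` is `K`-equivalent to the unit vector basis of `ℓ∞^N`. -/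
def KEquivLinftyUVB {X : Type} [NormedAddCommGroup X] [NormedSpace ℝ X]
    (N : ℕ) (K : ℝ) (z : Fin N → X) : Prop :=
  ∀ a : Fin N → ℝ,
    K⁻¹ * ((Finset.univ.sup fun l => ‖a l‖₊ : ℝ≥0) : ℝ) ≤ ‖∑ l, a l • z l‖ ∧
    ‖∑ l, a l • z l‖ ≤ K * ((Finset.univ.sup fun l => ‖a l‖₊ : ℝ≥0) : ℝ)

section Counting

variable {ι α : Type*} [Fintype ι] [DecidableEq ι] [Fintype α]

theorem card_filter_rel_apply_mul_card_le (r : α → α → Prop) [DecidableRel r] {i j : ι}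
    (hij : i ≠ j) {D : ℕ} (hD : ∀ b, #{a | r a b} ≤ D) :
    #{l : ι → α | r (l i) (l j)} * Fintype.card α ≤ D * Fintype.card α ^ Fintype.card ι := by
  set e := Equiv.funSplitAt i α
  let j' : {k // k ≠ i} := ⟨j, hij.symm⟩
  have hsplit : #{l : ι → α | r (l i) (l j)} = ∑ g : {k // k ≠ i} → α, #{a | r a (g j')} := by
    simp only [card_filter]
    exact (Fintype.sum_equiv e _ (fun p => if r p.1 (p.2 j') then 1 else 0) fun _ => rfl).trans
      (Fintype.sum_prod_type_right _)
  have hcard : Fintype.card α ^ Fintype.card ι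
      = Fintype.card α * Fintype.card ({k // k ≠ i} → α) := by
    rw [← Fintype.card_fun, Fintype.card_congr e, Fintype.card_prod]
  calc #{l : ι → α | r (l i) (l j)} * Fintype.card α
      ≤ Fintype.card ({k // k ≠ i} → α) * D * Fintype.card α := by
        rw [hsplit]
        gcongr
        exact (sum_le_card_nsmul univ _ D fun g _ => hD (g j')).trans_eq
          (by rw [smul_eq_mul, card_univ])
    _ = D * Fintype.card α ^ Fintype.card ι := by rw [hcard]; ring

theorem exists_forall_ne_not_rel (r : ι → ι → α → α → Prop) [∀ i j, DecidableRel (r i j)]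
    {D : ℕ} (hD : ∀ i j, i ≠ j → ∀ b, #{a | r i j a b} ≤ D)
    (hcard : Fintype.card ι * Fintype.card ι * D < Fintype.card α) :
    ∃ l : ι → α, ∀ i j, i ≠ j → ¬ r i j (l i) (l j) := by
  classical
  by_contra! hbad
  set n := Fintype.card α
  set m := Fintype.card ι
  let bad (q : ι × ι) : Finset (ι → α) := {l | r q.1 q.2 (l q.1) (l q.2)}
  have hcover : (univ : Finset (ι → α)) ⊆ (univ : Finset ι).offDiag.biUnion bad := by
    intro l _
    obtain ⟨i, j, hij, h⟩ := hbad l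
    simpa [bad] using ⟨i, j, hij, h⟩
  have hoffDiag : #(univ : Finset ι).offDiag ≤ m * m := by
    rw [offDiag_card]; exact Nat.sub_le _ _
  have hpos : 0 < n ^ m := pow_pos (by omega) _
  have : n ^ m * n < n ^ m * n := calc
    n ^ m * n ≤ (∑ q ∈ (univ : Finset ι).offDiag, #(bad q)) * n := by
        rw [← Fintype.card_fun, ← card_univ]
        gcongr
        exact (card_le_card hcover).trans card_biUnion_le
    _ ≤ ∑ q ∈ (univ : Finset ι).offDiag, D * n ^ m := by
        rw [sum_mul]
        refine sum_le_sum fun q hq => ?_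
        have hq : q.1 ≠ q.2 := (mem_offDiag.1 hq).2.2
        exact card_filter_rel_apply_mul_card_le _ hq (hD _ _ hq)
    _ ≤ m * m * D * n ^ m := by
        rw [sum_const, smul_eq_mul, ← mul_assoc]
        gcongr
    _ < n * n ^ m := by gcongr
    _ = n ^ m * n := mul_comm _ _
  exact lt_irrefl _ this

end Counting

namespace KEquivLinftyUVB

variable {X : Type} [NormedAddCommGroup X] [NormedSpace ℝ X] {N : ℕ} {K : ℝ} {z : Fin N → X}

theorem sum_abs_apply_le (hK : 0 ≤ K) (hz : KEquivLinftyUVB N K z) (f : StrongDual ℝ X) :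
    ∑ l, |f (z l)| ≤ K * ‖f‖ := by
  set c : Fin N → ℝ := fun l => SignType.sign (f (z l))
  have hc : (univ.sup fun l => ‖c l‖₊ : ℝ≥0) ≤ 1 :=
    Finset.sup_le fun l _ => by
      rcases lt_trichotomy (f (z l)) 0 with h | h | h <;> simp [c, h]
  calc ∑ l, |f (z l)| = f (∑ l, c l • z l) := by simp [c, map_sum]
    _ ≤ ‖f‖ * ‖∑ l, c l • z l‖ := (le_abs_self _).trans (f.le_opNorm _)
    _ ≤ ‖f‖ * (K * 1) := by gcongr; exact (hz c).2.trans (by gcongr; exact_mod_cast hc)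
    _ = K * ‖f‖ := by ring

theorem card_le_ceil {ε : ℝ} (hε : 0 < ε) (hK : 0 ≤ K) (hz : KEquivLinftyUVB N K z)
    {f : StrongDual ℝ X} (hf : ‖f‖ ≤ 1) : #{l | ε ≤ |f (z l)|} ≤ ⌈K / ε⌉₊ := by
  have : #{l | ε ≤ |f (z l)|} * ε ≤ K := calc
    #{l | ε ≤ |f (z l)|} * ε ≤ ∑ l ∈ {l | ε ≤ |f (z l)|}, |f (z l)| := by
      simpa using card_nsmul_le_sum _ _ ε fun l hl => (mem_filter.1 hl).2
    _ ≤ ∑ l, |f (z l)| := sum_le_sum_of_subset_of_nonneg (subset_univ _) fun _ _ _ => abs_nonneg _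
    _ ≤ K * ‖f‖ := hz.sum_abs_apply_le hK f
    _ ≤ K := mul_le_of_le_one_right hK hf
  exact Nat.cast_le.1 (((le_div_iff₀ hε).2 this).trans (Nat.le_ceil _))

end KEquivLinftyUVB

theorem gap_lemma (ε : ℝ) (hε : 0 < ε) (M : ℕ) (K : ℝ) (hK : 1 ≤ K) :
    ∃ N : ℕ, ∀ (X : Type) [NormedAddCommGroup X] [NormedSpace ℝ X] [CompleteSpace X],
      ∀ (x : Fin M → Fin N → X) (f : Fin M → Fin N → StrongDual ℝ X),
        (∀ i, KEquivLinftyUVB N K (x i)) → (∀ i l, ‖f i l‖ ≤ 1) →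
        ∃ l : Fin M → Fin N, ∀ i j : Fin M, i ≠ j → |f j (l j) (x i (l i))| < ε := by
  refine ⟨M * M * ⌈K / ε⌉₊ + 1, fun X _ _ _ x f hx hf => ?_⟩
  obtain ⟨l, hl⟩ := exists_forall_ne_not_rel (fun i j a b => ε ≤ |f j b (x i a)|)
    (fun i j _ b => (hx i).card_le_ceil hε (zero_le_one.trans hK) (hf j b)) (by simp)
  exact ⟨l, fun i j hij => not_le.1 (hl i j hij)⟩
end
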